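/- arXiv:2112.00095 — 10 statements merged into one kernel-verified Lean document; each statement's English description precedes it below -/
import Mathlib

section
/- Let Ω ⊂ ℝ² be a nonempty bounded open set and let ω, ω̂ : closure(Ω) → ℝ be continuous functions that are twice continuously differentiable on Ω and satisfy the Liouville equation, Δω = 2e^{ω} and Δω̂ = 2e^{ω̂}, on Ω. If ω(z) ≤ ω̂(z) for every z in the topological boundary ∂Ω, then ω(z) ≤ ω̂(z) for every z ∈ Ω. -/
open Filter Set

/-- Second derivative test: at a local max, the second derivative is nonpositive. -/
lemma deriv2_nonpos_of_isLocalMax {g : ℝ → ℝ} (hmax : IsLocalMax g 0)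
    (hg : ∀ᶠ t in nhds (0:ℝ), DifferentiableAt ℝ g t)
    (hg' : DifferentiableAt ℝ (deriv g) 0) :
    deriv (deriv g) 0 ≤ 0 := by
  by_contra h
  push_neg at h
  have h0 : deriv g 0 = 0 := hmax.deriv_eq_zero
  have hslope : Tendsto (slope (deriv g) 0) (nhdsWithin (0:ℝ) {0}ᶜ)
      (nhds (deriv (deriv g) 0)) :=
    hasDerivAt_iff_tendsto_slope.1 hg'.hasDerivAt
  have hpos : ∀ᶠ t in nhdsWithin (0:ℝ) (Ioi 0), 0 < deriv g t := by
    have h1 : ∀ᶠ t in nhdsWithin (0:ℝ) {0}ᶜ, 0 < slope (deriv g) 0 t :=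
      hslope.eventually (eventually_gt_nhds h)
    have h2 := h1.filter_mono (nhdsWithin_mono 0 (fun t (ht : t ∈ Ioi 0) => ne_of_gt ht))
    filter_upwards [h2, self_mem_nhdsWithin] with t ht (ht0 : t ∈ Ioi 0)
    have : slope (deriv g) 0 t = deriv g t / t := by
      simp [slope, h0, div_eq_inv_mul]
    rw [this] at ht
    have := mul_pos ht (show (0:ℝ) < t from ht0)
    rwa [div_mul_cancel₀] at this
    exact ne_of_gt ht0
  -- combine the three eventual facts on a right interval
  have hcomb : ∀ᶠ t in nhdsWithin (0:ℝ) (Ioi 0),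
      0 < deriv g t ∧ DifferentiableAt ℝ g t ∧ g t ≤ g 0 := by
    filter_upwards [hpos, (hg.and hmax).filter_mono nhdsWithin_le_nhds] with t h1 h2
    exact ⟨h1, h2.1, h2.2⟩
  obtain ⟨δ, hδ, hIoc⟩ := (mem_nhdsGT_iff_exists_Ioc_subset).1 hcomb
  have hδ0 : (0:ℝ) < δ := hδ
  have hcont : ContinuousOn g (Icc 0 δ) := by
    intro t ht
    rcases eq_or_lt_of_le ht.1 with rfl | h0t
    · exact (hg.self_of_nhds).continuousAt.continuousWithinAt
    · exact ((hIoc ⟨h0t, ht.2⟩).2.1).continuousAt.continuousWithinAt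
  have hmono : StrictMonoOn g (Icc 0 δ) := by
    apply strictMonoOn_of_deriv_pos (convex_Icc 0 δ) hcont
    intro t ht
    rw [interior_Icc] at ht
    exact (hIoc ⟨ht.1, le_of_lt ht.2⟩).1
  have h1 : g 0 < g δ := hmono (left_mem_Icc.2 hδ0.le) (right_mem_Icc.2 hδ0.le) hδ0
  exact absurd (hIoc ⟨hδ0, le_refl δ⟩).2.2 (not_le.2 h1)

variable {Ω : Set ℂ} {f : ℂ → ℝ} {z : ℂ}

/-- The curve `t ↦ f (z + t • v)` eventually has derivative `fderiv ℝ f (z + t•v) v`. -/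
lemma eventually_deriv_line (hopen : IsOpen Ω) (hz : z ∈ Ω)
    (hf : ContDiffOn ℝ 2 f Ω) (v : ℂ) :
    (deriv (fun t : ℝ => f (z + t • v))) =ᶠ[nhds (0:ℝ)]
      (fun t : ℝ => fderiv ℝ f (z + t • v) v) := by
  have hU : IsOpen ((fun t : ℝ => z + t • v) ⁻¹' Ω) :=
    hopen.preimage (by fun_prop)
  have h0 : (0:ℝ) ∈ (fun t : ℝ => z + t • v) ⁻¹' Ω := by simpa using hz
  filter_upwards [hU.mem_nhds h0] with t ht
  have hφ : HasDerivAt (fun s : ℝ => z + s • v) v t := by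
    simpa using ((hasDerivAt_id t).smul_const v).const_add z
  have hdf : DifferentiableAt ℝ f (z + t • v) :=
    (hf.contDiffAt (hopen.mem_nhds ht)).differentiableAt (by norm_num)
  exact (hdf.hasFDerivAt.comp_hasDerivAt t hφ).deriv

lemma differentiableAt_fderiv_line (hopen : IsOpen Ω) (hz : z ∈ Ω)
    (hf : ContDiffOn ℝ 2 f Ω) (v : ℂ) :
    DifferentiableAt ℝ (fun t : ℝ => fderiv ℝ f (z + t • v) v) 0 := by
  have h1 : ContDiffAt ℝ 1 (fderiv ℝ f) z :=
    (hf.contDiffAt (hopen.mem_nhds hz)).fderiv_right (by norm_num)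
  have h2 : DifferentiableAt ℝ (fun t : ℝ => z + t • v) 0 := by fun_prop
  have h3 : DifferentiableAt ℝ (fderiv ℝ f) z := h1.differentiableAt (by norm_num)
  have h3' : DifferentiableAt ℝ (fderiv ℝ f) ((fun t : ℝ => z + t • v) 0) := by
    simpa using h3
  have h4 := h3'.comp 0 h2
  have h5 := (ContinuousLinearMap.apply ℝ ℝ v).differentiableAt.comp 0 h4
  simpa [Function.comp_def] using h5

/-- The second line derivative equals the derivative of `t ↦ fderiv f (z+t•v) v` at `0`. -/
lemma lineDeriv2_eq (hopen : IsOpen Ω) (hz : z ∈ Ω)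
    (hf : ContDiffOn ℝ 2 f Ω) (v : ℂ) :
    lineDeriv ℝ (fun w => lineDeriv ℝ f w v) z v
      = deriv (fun t : ℝ => fderiv ℝ f (z + t • v) v) 0 := by
  rw [lineDeriv]
  apply Filter.EventuallyEq.deriv_eq
  have hU : IsOpen ((fun t : ℝ => z + t • v) ⁻¹' Ω) := hopen.preimage (by fun_prop)
  have h0 : (0:ℝ) ∈ (fun t : ℝ => z + t • v) ⁻¹' Ω := by simpa using hz
  filter_upwards [hU.mem_nhds h0] with t ht
  have hdf : DifferentiableAt ℝ f (z + t • v) :=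
    (hf.contDiffAt (hopen.mem_nhds ht)).differentiableAt (by norm_num)
  exact hdf.lineDeriv_eq_fderiv

/-- Second line derivative at a local max of a `C²` function is nonpositive. -/
lemma lineDeriv2_nonpos (hopen : IsOpen Ω) (hz : z ∈ Ω)
    (hf : ContDiffOn ℝ 2 f Ω) (hmax : IsLocalMax f z) (v : ℂ) :
    lineDeriv ℝ (fun w => lineDeriv ℝ f w v) z v ≤ 0 := by
  rw [lineDeriv2_eq hopen hz hf v]
  set g : ℝ → ℝ := fun t => f (z + t • v) with hg
  have hev := eventually_deriv_line hopen hz hf v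
  rw [← hev.deriv_eq]
  apply deriv2_nonpos_of_isLocalMax
  · -- local max of g at 0
    have hφ : ContinuousAt (fun t : ℝ => z + t • v) 0 := by fun_prop
    have : Tendsto (fun t : ℝ => z + t • v) (nhds 0) (nhds z) := by
      simpa using hφ.tendsto
    have := this.eventually hmax
    simpa [IsLocalMax, IsMaxFilter, hg] using this
  · have hU : IsOpen ((fun t : ℝ => z + t • v) ⁻¹' Ω) := hopen.preimage (by fun_prop)
    have h0 : (0:ℝ) ∈ (fun t : ℝ => z + t • v) ⁻¹' Ω := by simpa using hz
    filter_upwards [hU.mem_nhds h0] with t ht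
    have hdf : DifferentiableAt ℝ f (z + t • v) :=
      (hf.contDiffAt (hopen.mem_nhds ht)).differentiableAt (by norm_num)
    have hφ : HasDerivAt (fun s : ℝ => z + s • v) v t := by
      simpa using ((hasDerivAt_id t).smul_const v).const_add z
    exact ⟨_, (hdf.hasFDerivAt.comp_hasDerivAt t hφ)⟩
  · exact (hev.differentiableAt_iff).2 (differentiableAt_fderiv_line hopen hz hf v)

/-- The Euclidean Laplacian `Δf = ∂²f/∂x² + ∂²f/∂y²` of a function `f : ℂ → ℝ`,
expressed via iterated line derivatives in the directions `1` and `I`. -/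
noncomputable def lap (f : ℂ → ℝ) (z : ℂ) : ℝ :=
  lineDeriv ℝ (fun w => lineDeriv ℝ f w 1) z 1 +
  lineDeriv ℝ (fun w => lineDeriv ℝ f w Complex.I) z Complex.I

lemma lap_nonpos_of_isLocalMax (hopen : IsOpen Ω) (hz : z ∈ Ω)
    (hf : ContDiffOn ℝ 2 f Ω) (hmax : IsLocalMax f z) : lap f z ≤ 0 :=
  add_nonpos (lineDeriv2_nonpos hopen hz hf hmax 1)
    (lineDeriv2_nonpos hopen hz hf hmax Complex.I)

lemma lap_sub (hopen : IsOpen Ω) (hz : z ∈ Ω) {f₁ f₂ : ℂ → ℝ}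
    (h₁ : ContDiffOn ℝ 2 f₁ Ω) (h₂ : ContDiffOn ℝ 2 f₂ Ω) :
    lap (f₁ - f₂) z = lap f₁ z - lap f₂ z := by
  have key : ∀ v : ℂ, lineDeriv ℝ (fun w => lineDeriv ℝ (f₁ - f₂) w v) z v
      = lineDeriv ℝ (fun w => lineDeriv ℝ f₁ w v) z v
      - lineDeriv ℝ (fun w => lineDeriv ℝ f₂ w v) z v := by
    intro v
    have hsub : ContDiffOn ℝ 2 (f₁ - f₂) Ω := h₁.sub h₂
    rw [lineDeriv2_eq hopen hz hsub v, lineDeriv2_eq hopen hz h₁ v,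
      lineDeriv2_eq hopen hz h₂ v]
    have hev : (fun t : ℝ => fderiv ℝ (f₁ - f₂) (z + t • v) v) =ᶠ[nhds (0:ℝ)]
        (fun t : ℝ => fderiv ℝ f₁ (z + t • v) v - fderiv ℝ f₂ (z + t • v) v) := by
      have hU : IsOpen ((fun t : ℝ => z + t • v) ⁻¹' Ω) := hopen.preimage (by fun_prop)
      have h0 : (0:ℝ) ∈ (fun t : ℝ => z + t • v) ⁻¹' Ω := by simpa using hz
      filter_upwards [hU.mem_nhds h0] with t ht
      have hd1 : DifferentiableAt ℝ f₁ (z + t • v) :=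
        (h₁.contDiffAt (hopen.mem_nhds ht)).differentiableAt (by norm_num)
      have hd2 : DifferentiableAt ℝ f₂ (z + t • v) :=
        (h₂.contDiffAt (hopen.mem_nhds ht)).differentiableAt (by norm_num)
      have hfd := fderiv_fun_sub hd1 hd2
      simp only [Pi.sub_def]
      rw [hfd]
      rfl
    rw [hev.deriv_eq]
    exact deriv_fun_sub (differentiableAt_fderiv_line hopen hz h₁ v)
      (differentiableAt_fderiv_line hopen hz h₂ v)
  simp only [lap, key 1, key Complex.I]; ring

/-- Comparison principle for the Liouville equation `Δω = 2 e^ω`: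
if `ω ≤ ω̂` on the boundary of a nonempty bounded open set `Ω ⊆ ℂ`, then `ω ≤ ω̂` on `Ω`. -/
theorem liouville_comparison_principle
    (Ω : Set ℂ) (hne : Ω.Nonempty) (hopen : IsOpen Ω) (hbounded : Bornology.IsBounded Ω)
    (ω ωhat : ℂ → ℝ)
    (hωcont : ContinuousOn ω (closure Ω)) (hωhatcont : ContinuousOn ωhat (closure Ω))
    (hωC2 : ContDiffOn ℝ 2 ω Ω) (hωhatC2 : ContDiffOn ℝ 2 ωhat Ω)
    (hωeq : ∀ z ∈ Ω, lap ω z = 2 * Real.exp (ω z))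
    (hωhateq : ∀ z ∈ Ω, lap ωhat z = 2 * Real.exp (ωhat z))
    (hbdry : ∀ z ∈ frontier Ω, ω z ≤ ωhat z) :
    ∀ z ∈ Ω, ω z ≤ ωhat z := by
  set u : ℂ → ℝ := ω - ωhat with hu
  have hucont : ContinuousOn u (closure Ω) := hωcont.sub hωhatcont
  have hcpt : IsCompact (closure Ω) := hbounded.isCompact_closure
  obtain ⟨z₀, hz₀mem, hz₀max⟩ := hcpt.exists_isMaxOn
    (hne.mono subset_closure) hucont
  have hkey : u z₀ ≤ 0 := by
    by_contra hpos
    push_neg at hpos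
    have hz₀Ω : z₀ ∈ Ω := by
      by_contra hno
      have hfr : z₀ ∈ frontier Ω := by
        rw [hopen.frontier_eq]; exact ⟨hz₀mem, hno⟩
      exact absurd (sub_nonpos.2 (hbdry z₀ hfr)) (not_le.2 hpos)
    have hmax : IsLocalMax u z₀ := by
      have : closure Ω ∈ nhds z₀ :=
        Filter.mem_of_superset (hopen.mem_nhds hz₀Ω) subset_closure
      exact Filter.eventually_iff_exists_mem.2 ⟨closure Ω, this, fun w hw => hz₀max hw⟩
    have hlap : lap u z₀ ≤ 0 :=
      lap_nonpos_of_isLocalMax hopen hz₀Ω (hωC2.sub hωhatC2) hmax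
    have heq : lap u z₀ = 2 * Real.exp (ω z₀) - 2 * Real.exp (ωhat z₀) := by
      rw [hu, lap_sub hopen hz₀Ω hωC2 hωhatC2, hωeq z₀ hz₀Ω, hωhateq z₀ hz₀Ω]
    have hlt : ωhat z₀ < ω z₀ := by
      have := hpos; simp only [hu, Pi.sub_apply] at this; linarith
    have : 0 < lap u z₀ := by
      rw [heq]
      have := Real.exp_lt_exp.2 hlt
      linarith
    linarith
  intro z hz
  have := hz₀max (subset_closure hz)
  simp only [hu, Pi.sub_apply] at hkey ⊢
  have h2 : ω z - ωhat z ≤ ω z₀ - ωhat z₀ := this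
  linarith
end

section
/- Let L > 0 and let ω : {z ∈ ℂ : e^{−L} ≤ |z| ≤ 1} → ℝ be continuous on the closed annulus and twice continuously differentiable on the open annulus A_L, satisfying the Liouville equation Δω = 2e^{ω} on A_L. Then ω(z) ≤ ω_L(z) for every z ∈ A_L, i.e. e^{ω(z)} ≤ π² / ( L² |z|² sin²(π log|z| / L) ). -/
/-- The open annulus `A_L = {e^{-L} < |z| < 1}`. -/
def annulusSet (L : ℝ) : Set ℂ :=
  {z : ℂ | Real.exp (-L) < ‖z‖ ∧ ‖z‖ < 1}

/-- The conformal factor `ω_L` of the hyperbolic metric of the annulus `A_L`. -/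
noncomputable def omegaL (L : ℝ) (z : ℂ) : ℝ :=
  Real.log (Real.pi ^ 2 / (L ^ 2 * ‖z‖ ^ 2 *
    Real.sin (Real.pi * Real.log (‖z‖) / L) ^ 2))

open Real



noncomputable def Ffun (L u : ℝ) : ℝ :=
  Real.log (Real.pi ^ 2 / (L ^ 2 * u * Real.sin (Real.pi * Real.log u / (2 * L)) ^ 2))

noncomputable def Pfun (L u : ℝ) : ℝ :=
  -(1 / u) - Real.pi * Real.cos (Real.pi * Real.log u / (2 * L)) /
    (L * u * Real.sin (Real.pi * Real.log u / (2 * L)))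

noncomputable def Qfun (L u : ℝ) : ℝ :=
  1 / u ^ 2 + Real.pi ^ 2 / (2 * L ^ 2 * u ^ 2 * Real.sin (Real.pi * Real.log u / (2 * L)) ^ 2)
    + Real.pi * Real.cos (Real.pi * Real.log u / (2 * L)) /
      (L * u ^ 2 * Real.sin (Real.pi * Real.log u / (2 * L)))

lemma sin_neg_of_mem (x : ℝ) (h1 : -Real.pi < x) (h2 : x < 0) : Real.sin x < 0 := by
  have := Real.sin_pos_of_pos_of_lt_pi (x := -x) (by linarith) (by linarith)
  rw [Real.sin_neg] at this; linarith

section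
variable {L u : ℝ} (hL : 0 < L) (hu : u ∈ Set.Ioo (Real.exp (-(2*L))) 1)
include hL hu

lemma hu0 : 0 < u := lt_trans (Real.exp_pos _) hu.1

lemma hlogu : Real.log u ∈ Set.Ioo (-(2*L)) 0 := by
  constructor
  · have := Real.log_lt_log (Real.exp_pos _) hu.1
    rwa [Real.log_exp] at this
  · have := Real.log_lt_log (hu0 hL hu) hu.2
    simpa using this

lemma htheta : Real.pi * Real.log u / (2 * L) ∈ Set.Ioo (-Real.pi) 0 := by
  have hl := hlogu hL hu
  have hπ := Real.pi_pos
  constructor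
  · rw [lt_div_iff₀ (by linarith : (0:ℝ) < 2 * L)]
    nlinarith [hl.1]
  · apply div_neg_of_neg_of_pos
    · nlinarith [hl.2]
    · linarith

lemma hsin_neg : Real.sin (Real.pi * Real.log u / (2 * L)) < 0 :=
  sin_neg_of_mem _ (htheta hL hu).1 (htheta hL hu).2

lemma hsin_ne : Real.sin (Real.pi * Real.log u / (2 * L)) ≠ 0 :=
  ne_of_lt (hsin_neg hL hu)

lemma hasDerivAt_theta : HasDerivAt (fun u => Real.pi * Real.log u / (2 * L))
    (Real.pi * u⁻¹ / (2 * L)) u :=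
  ((Real.hasDerivAt_log (ne_of_gt (hu0 hL hu))).const_mul Real.pi).div_const (2 * L)

lemma hasDerivAt_sin_theta : HasDerivAt (fun u => Real.sin (Real.pi * Real.log u / (2 * L)))
    (Real.cos (Real.pi * Real.log u / (2 * L)) * (Real.pi * u⁻¹ / (2 * L))) u :=
  (Real.hasDerivAt_sin _).comp u (hasDerivAt_theta hL hu)

lemma hasDerivAt_F : HasDerivAt (Ffun L) (Pfun L u) u := by
  have hu0' := hu0 hL hu
  have hsne := hsin_ne hL hu
  have hLne : L ≠ 0 := ne_of_gt hL
  have hg : HasDerivAt (fun u => L ^ 2 * u * Real.sin (Real.pi * Real.log u / (2 * L)) ^ 2)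
      ((L ^ 2 * 1) * Real.sin (Real.pi * Real.log u / (2 * L)) ^ 2 +
        (L ^ 2 * u) * (2 * Real.sin (Real.pi * Real.log u / (2 * L)) ^ 1 *
          (Real.cos (Real.pi * Real.log u / (2 * L)) * (Real.pi * u⁻¹ / (2 * L))))) u := by
    exact ((hasDerivAt_id u).const_mul (L ^ 2)).mul ((hasDerivAt_sin_theta hL hu).pow 2)
  have hgne : L ^ 2 * u * Real.sin (Real.pi * Real.log u / (2 * L)) ^ 2 ≠ 0 := by
    positivity
  have hdiv : HasDerivAt (fun u => Real.pi ^ 2 / (L ^ 2 * u * Real.sin (Real.pi * Real.log u / (2 * L)) ^ 2))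
      ((0 * (L ^ 2 * u * Real.sin (Real.pi * Real.log u / (2 * L)) ^ 2) - Real.pi ^ 2 *
        ((L ^ 2 * 1) * Real.sin (Real.pi * Real.log u / (2 * L)) ^ 2 +
        (L ^ 2 * u) * (2 * Real.sin (Real.pi * Real.log u / (2 * L)) ^ 1 *
          (Real.cos (Real.pi * Real.log u / (2 * L)) * (Real.pi * u⁻¹ / (2 * L)))))) /
        (L ^ 2 * u * Real.sin (Real.pi * Real.log u / (2 * L)) ^ 2) ^ 2) u :=
    (hasDerivAt_const u (Real.pi ^ 2)).div hg hgne
  have hratne : Real.pi ^ 2 / (L ^ 2 * u * Real.sin (Real.pi * Real.log u / (2 * L)) ^ 2) ≠ 0 := by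
    positivity
  have := (Real.hasDerivAt_log hratne).comp u hdiv
  refine this.congr_deriv ?_
  symm
  unfold Pfun
  field_simp
  ring

lemma hasDerivAt_P : HasDerivAt (Pfun L) (Qfun L u) u := by
  have hu0' := hu0 hL hu
  have hsne := hsin_ne hL hu
  have hLne : L ≠ 0 := ne_of_gt hL
  have h1 : HasDerivAt (fun u : ℝ => -(1 / u))
      (-((0 * u - 1 * 1) / u ^ 2)) u :=
    (((hasDerivAt_const u (1:ℝ)).div (hasDerivAt_id u) (ne_of_gt hu0'))).neg
  have hcos : HasDerivAt (fun u => Real.cos (Real.pi * Real.log u / (2 * L)))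
      (-Real.sin (Real.pi * Real.log u / (2 * L)) * (Real.pi * u⁻¹ / (2 * L))) u :=
    (Real.hasDerivAt_cos _).comp u (hasDerivAt_theta hL hu)
  have hnum : HasDerivAt (fun u => Real.pi * Real.cos (Real.pi * Real.log u / (2 * L)))
      (Real.pi * (-Real.sin (Real.pi * Real.log u / (2 * L)) * (Real.pi * u⁻¹ / (2 * L)))) u :=
    hcos.const_mul Real.pi
  have hden : HasDerivAt (fun u => L * u * Real.sin (Real.pi * Real.log u / (2 * L)))
      ((L * 1) * Real.sin (Real.pi * Real.log u / (2 * L)) +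
        (L * u) * (Real.cos (Real.pi * Real.log u / (2 * L)) * (Real.pi * u⁻¹ / (2 * L)))) u :=
    ((hasDerivAt_id u).const_mul L).mul (hasDerivAt_sin_theta hL hu)
  have hdenne : L * u * Real.sin (Real.pi * Real.log u / (2 * L)) ≠ 0 := by
    have := hsin_neg hL hu
    intro h
    have h2 : 0 < L * u := by positivity
    nlinarith
  have h2 := hnum.div hden hdenne
  have := h1.sub h2
  refine this.congr_deriv ?_
  symm
  unfold Qfun
  have hcs := Real.sin_sq_add_cos_sq (Real.pi * Real.log u / (2 * L))
  set s := Real.sin (Real.pi * Real.log u / (2 * L)) with hs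
  set c := Real.cos (Real.pi * Real.log u / (2 * L)) with hc
  have hc2 : c ^ 2 = 1 - s ^ 2 := by nlinarith [hcs]
  field_simp
  ring_nf
  rw [hc2]
  ring

lemma lap_identity : 4 * u * Qfun L u + 4 * Pfun L u =
    2 * (Real.pi ^ 2 / (L ^ 2 * u * Real.sin (Real.pi * Real.log u / (2 * L)) ^ 2)) := by
  have hu0' := hu0 hL hu
  have hsne := hsin_ne hL hu
  have hLne : L ≠ 0 := ne_of_gt hL
  unfold Pfun Qfun
  field_simp
  ring

end

lemma isOpen_annulusSet (L : ℝ) : IsOpen (annulusSet L) := by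
  have : annulusSet L = (fun z : ℂ => ‖z‖) ⁻¹' (Set.Ioo (Real.exp (-L)) 1) := rfl
  rw [this]
  exact isOpen_Ioo.preimage continuous_norm

lemma abs_pos_of_mem {L : ℝ} {z : ℂ} (hz : z ∈ annulusSet L) : 0 < ‖z‖ :=
  lt_trans (Real.exp_pos _) hz.1

lemma sq_eq_abs {z : ℂ} : z.re ^ 2 + z.im ^ 2 = ‖z‖ ^ 2 := by
  rw [Complex.sq_norm, Complex.normSq_apply]; ring

lemma abs_sq_mem {L : ℝ} {z : ℂ} (hz : z ∈ annulusSet L) :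
    z.re ^ 2 + z.im ^ 2 ∈ Set.Ioo (Real.exp (-(2 * L))) 1 := by
  rw [sq_eq_abs]
  have h0 : (0:ℝ) ≤ ‖z‖ := norm_nonneg z
  constructor
  · have : Real.exp (-(2*L)) = Real.exp (-L) ^ 2 := by
      rw [sq, ← Real.exp_add]; ring_nf
    rw [this]
    exact pow_lt_pow_left₀ hz.1 (le_of_lt (Real.exp_pos _)) two_ne_zero
  · calc ‖z‖ ^ 2 < 1 ^ 2 := pow_lt_pow_left₀ hz.2 h0 two_ne_zero
      _ = 1 := one_pow 2

lemma log_abs_mem {L : ℝ} {z : ℂ} (hz : z ∈ annulusSet L) :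
    Real.log (‖z‖) ∈ Set.Ioo (-L) 0 := by
  constructor
  · have := Real.log_lt_log (Real.exp_pos _) hz.1
    rwa [Real.log_exp] at this
  · have := Real.log_lt_log (abs_pos_of_mem hz) hz.2
    simpa using this

lemma theta_mem {L : ℝ} (hL : 0 < L) {z : ℂ} (hz : z ∈ annulusSet L) :
    Real.pi * Real.log (‖z‖) / L ∈ Set.Ioo (-Real.pi) 0 := by
  have hl := log_abs_mem hz
  have hπ := Real.pi_pos
  constructor
  · rw [lt_div_iff₀ hL]
    nlinarith [hl.1]
  · apply div_neg_of_neg_of_pos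
    · nlinarith [hl.2]
    · exact hL

lemma sin_neg_of_mem' (x : ℝ) (h1 : -Real.pi < x) (h2 : x < 0) : Real.sin x < 0 := by
  have := Real.sin_pos_of_pos_of_lt_pi (x := -x) (by linarith) (by linarith)
  rw [Real.sin_neg] at this; linarith

lemma sin_theta_neg {L : ℝ} (hL : 0 < L) {z : ℂ} (hz : z ∈ annulusSet L) :
    Real.sin (Real.pi * Real.log (‖z‖) / L) < 0 :=
  sin_neg_of_mem' _ (theta_mem hL hz).1 (theta_mem hL hz).2

lemma arg_pos {L : ℝ} (hL : 0 < L) {z : ℂ} (hz : z ∈ annulusSet L) :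
    0 < Real.pi ^ 2 / (L ^ 2 * ‖z‖ ^ 2 *
      Real.sin (Real.pi * Real.log (‖z‖) / L) ^ 2) := by
  have h1 := abs_pos_of_mem hz
  have h2 := sin_theta_neg hL hz
  have h2' : Real.sin (Real.pi * Real.log (‖z‖) / L) ≠ 0 := ne_of_lt h2
  positivity

lemma exp_omegaL {L : ℝ} (hL : 0 < L) {z : ℂ} (hz : z ∈ annulusSet L) :
    Real.exp (omegaL L z) = Real.pi ^ 2 / (L ^ 2 * ‖z‖ ^ 2 *
      Real.sin (Real.pi * Real.log (‖z‖) / L) ^ 2) :=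
  Real.exp_log (arg_pos hL hz)

lemma theta_eq {L : ℝ} {z : ℂ} (h0 : 0 < ‖z‖) :
    Real.pi * Real.log (z.re ^ 2 + z.im ^ 2) / (2 * L) =
      Real.pi * Real.log (‖z‖) / L := by
  rw [sq_eq_abs, Real.log_pow]
  push_cast
  ring

lemma omegaL_eq_F {L : ℝ} {z : ℂ} (hz : z ∈ annulusSet L) :
    omegaL L z = Ffun L (z.re ^ 2 + z.im ^ 2) := by
  unfold omegaL Ffun
  rw [theta_eq (abs_pos_of_mem hz), sq_eq_abs]

lemma line_mem_nhds {U : Set ℂ} (hU : IsOpen U) {w v : ℂ} (hw : w ∈ U) :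
    ∀ᶠ t : ℝ in nhds 0, w + t • v ∈ U := by
  have hc : Continuous (fun t : ℝ => w + t • v) := by continuity
  have h0 : w + (0:ℝ) • v ∈ U := by simpa
  have := hc.continuousAt (x := 0) |>.preimage_mem_nhds (hU.mem_nhds h0)
  exact Filter.eventually_of_mem this fun t ht => ht

lemma hasDerivAt_sq_line_re (w : ℂ) :
    HasDerivAt (fun t : ℝ => (w.re + t) ^ 2 + w.im ^ 2) (2 * w.re) 0 := by
  have h : HasDerivAt (fun t : ℝ => (w.re + t) ^ 2 + w.im ^ 2)
      (2 * (w.re + 0) ^ 1 * 1) 0 :=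
    (((hasDerivAt_id (0:ℝ)).const_add w.re).pow 2).add_const _
  convert h using 1; ring

lemma hasDerivAt_sq_line_im (w : ℂ) :
    HasDerivAt (fun t : ℝ => w.re ^ 2 + (w.im + t) ^ 2) (2 * w.im) 0 := by
  have h := (hasDerivAt_const (0:ℝ) (w.re ^ 2)).add
    (((hasDerivAt_id (0:ℝ)).const_add w.im).pow 2)
  refine h.congr_deriv ?_
  symm
  simp

lemma lineDeriv_omegaL_one {L : ℝ} (hL : 0 < L) {w : ℂ} (hw : w ∈ annulusSet L) :
    lineDeriv ℝ (omegaL L) w 1 = Pfun L (w.re ^ 2 + w.im ^ 2) * (2 * w.re) := by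
  have hev : (fun t : ℝ => omegaL L (w + t • (1:ℂ))) =ᶠ[nhds 0]
      fun t => Ffun L ((w.re + t) ^ 2 + w.im ^ 2) := by
    filter_upwards [line_mem_nhds (isOpen_annulusSet L) hw] with t ht
    rw [omegaL_eq_F ht]
    congr 2 <;> simp [Complex.add_re, Complex.add_im, Complex.smul_re, Complex.smul_im]
  have hx : (w.re + (0:ℝ)) ^ 2 + w.im ^ 2 = w.re ^ 2 + w.im ^ 2 := by ring
  have hF : HasDerivAt (Ffun L) (Pfun L (w.re ^ 2 + w.im ^ 2))
      ((w.re + (0:ℝ)) ^ 2 + w.im ^ 2) := by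
    rw [hx]; exact hasDerivAt_F hL (abs_sq_mem hw)
  have hd := hF.comp 0 (hasDerivAt_sq_line_re w)
  show deriv (fun t : ℝ => omegaL L (w + t • (1:ℂ))) 0 = _
  rw [hev.deriv_eq]
  exact hd.deriv

lemma lineDeriv_omegaL_I {L : ℝ} (hL : 0 < L) {w : ℂ} (hw : w ∈ annulusSet L) :
    lineDeriv ℝ (omegaL L) w Complex.I = Pfun L (w.re ^ 2 + w.im ^ 2) * (2 * w.im) := by
  have hev : (fun t : ℝ => omegaL L (w + t • Complex.I)) =ᶠ[nhds 0]
      fun t => Ffun L (w.re ^ 2 + (w.im + t) ^ 2) := by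
    filter_upwards [line_mem_nhds (isOpen_annulusSet L) hw] with t ht
    rw [omegaL_eq_F ht]
    congr 2 <;> simp [Complex.add_re, Complex.add_im, Complex.smul_re, Complex.smul_im]
  have hx : w.re ^ 2 + (w.im + (0:ℝ)) ^ 2 = w.re ^ 2 + w.im ^ 2 := by ring
  have hF : HasDerivAt (Ffun L) (Pfun L (w.re ^ 2 + w.im ^ 2))
      (w.re ^ 2 + (w.im + (0:ℝ)) ^ 2) := by
    rw [hx]; exact hasDerivAt_F hL (abs_sq_mem hw)
  have hd := hF.comp 0 (hasDerivAt_sq_line_im w)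
  show deriv (fun t : ℝ => omegaL L (w + t • Complex.I)) 0 = _
  rw [hev.deriv_eq]
  exact hd.deriv

lemma lineDeriv2_omegaL_one {L : ℝ} (hL : 0 < L) {z : ℂ} (hz : z ∈ annulusSet L) :
    lineDeriv ℝ (fun w => lineDeriv ℝ (omegaL L) w 1) z 1 =
      Qfun L (z.re ^ 2 + z.im ^ 2) * (2 * z.re) * (2 * z.re) +
        Pfun L (z.re ^ 2 + z.im ^ 2) * 2 := by
  have hev : (fun t : ℝ => lineDeriv ℝ (omegaL L) (z + t • (1:ℂ)) 1) =ᶠ[nhds 0]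
      fun t => Pfun L ((z.re + t) ^ 2 + z.im ^ 2) * (2 * (z.re + t)) := by
    filter_upwards [line_mem_nhds (isOpen_annulusSet L) hz] with t ht
    rw [lineDeriv_omegaL_one hL ht]
    congr 2 <;> simp [Complex.add_re, Complex.add_im, Complex.smul_re, Complex.smul_im]
  have hx : (z.re + (0:ℝ)) ^ 2 + z.im ^ 2 = z.re ^ 2 + z.im ^ 2 := by ring
  have hP : HasDerivAt (Pfun L) (Qfun L (z.re ^ 2 + z.im ^ 2))
      ((z.re + (0:ℝ)) ^ 2 + z.im ^ 2) := by
    rw [hx]; exact hasDerivAt_P hL (abs_sq_mem hz)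
  have h1 := hP.comp 0 (hasDerivAt_sq_line_re z)
  have h2 : HasDerivAt (fun t : ℝ => 2 * (z.re + t)) (2 * 1) 0 :=
    ((hasDerivAt_id (0:ℝ)).const_add z.re).const_mul 2
  have hd := h1.mul h2
  show deriv (fun t : ℝ => lineDeriv ℝ (omegaL L) (z + t • (1:ℂ)) 1) 0 = _
  rw [hev.deriv_eq]
  have hd' := hd.deriv
  simp only [Function.comp_def, Pi.mul_def] at hd'
  rw [hd', hx]
  ring

lemma lineDeriv2_omegaL_I {L : ℝ} (hL : 0 < L) {z : ℂ} (hz : z ∈ annulusSet L) :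
    lineDeriv ℝ (fun w => lineDeriv ℝ (omegaL L) w Complex.I) z Complex.I =
      Qfun L (z.re ^ 2 + z.im ^ 2) * (2 * z.im) * (2 * z.im) +
        Pfun L (z.re ^ 2 + z.im ^ 2) * 2 := by
  have hev : (fun t : ℝ => lineDeriv ℝ (omegaL L) (z + t • Complex.I) Complex.I) =ᶠ[nhds 0]
      fun t => Pfun L (z.re ^ 2 + (z.im + t) ^ 2) * (2 * (z.im + t)) := by
    filter_upwards [line_mem_nhds (isOpen_annulusSet L) hz] with t ht
    rw [lineDeriv_omegaL_I hL ht]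
    congr 2 <;> simp [Complex.add_re, Complex.add_im, Complex.smul_re, Complex.smul_im]
  have hx : z.re ^ 2 + (z.im + (0:ℝ)) ^ 2 = z.re ^ 2 + z.im ^ 2 := by ring
  have hP : HasDerivAt (Pfun L) (Qfun L (z.re ^ 2 + z.im ^ 2))
      (z.re ^ 2 + (z.im + (0:ℝ)) ^ 2) := by
    rw [hx]; exact hasDerivAt_P hL (abs_sq_mem hz)
  have h1 := hP.comp 0 (hasDerivAt_sq_line_im z)
  have h2 : HasDerivAt (fun t : ℝ => 2 * (z.im + t)) (2 * 1) 0 :=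
    ((hasDerivAt_id (0:ℝ)).const_add z.im).const_mul 2
  have hd := h1.mul h2
  show deriv (fun t : ℝ => lineDeriv ℝ (omegaL L) (z + t • Complex.I) Complex.I) 0 = _
  rw [hev.deriv_eq]
  have hd' := hd.deriv
  simp only [Function.comp_def, Pi.mul_def] at hd'
  rw [hd', hx]
  ring

lemma lap_omegaL {L : ℝ} (hL : 0 < L) {z : ℂ} (hz : z ∈ annulusSet L) :
    lap (omegaL L) z = 2 * Real.exp (omegaL L z) := by
  have hu := abs_sq_mem hz
  have key := lap_identity hL hu
  have hθ : Real.pi * Real.log (z.re ^ 2 + z.im ^ 2) / (2 * L) =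
      Real.pi * Real.log (‖z‖) / L := theta_eq (abs_pos_of_mem hz)
  rw [exp_omegaL hL hz]
  unfold lap
  rw [lineDeriv2_omegaL_one hL hz, lineDeriv2_omegaL_I hL hz]
  have : Qfun L (z.re ^ 2 + z.im ^ 2) * (2 * z.re) * (2 * z.re) +
      Pfun L (z.re ^ 2 + z.im ^ 2) * 2 +
      (Qfun L (z.re ^ 2 + z.im ^ 2) * (2 * z.im) * (2 * z.im) +
        Pfun L (z.re ^ 2 + z.im ^ 2) * 2) =
      4 * (z.re ^ 2 + z.im ^ 2) * Qfun L (z.re ^ 2 + z.im ^ 2) +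
        4 * Pfun L (z.re ^ 2 + z.im ^ 2) := by ring
  rw [this, key, hθ, sq_eq_abs]

lemma contDiffAt_F {L u : ℝ} (hL : 0 < L) (hu : u ∈ Set.Ioo (Real.exp (-(2*L))) 1) :
    ContDiffAt ℝ 2 (Ffun L) u := by
  have hu0' : (0:ℝ) < u := hu0 hL hu
  have hsne := hsin_ne hL hu
  have hθ : ContDiffAt ℝ 2 (fun u : ℝ => Real.pi * Real.log u / (2 * L)) u :=
    (contDiffAt_const.mul (Real.contDiffAt_log.2 (ne_of_gt hu0'))).div_const (2 * L)
  have hsin : ContDiffAt ℝ 2 (fun u : ℝ => Real.sin (Real.pi * Real.log u / (2 * L))) u :=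
    Real.contDiff_sin.contDiffAt.comp u hθ
  have hg : ContDiffAt ℝ 2
      (fun u : ℝ => L ^ 2 * u * Real.sin (Real.pi * Real.log u / (2 * L)) ^ 2) u :=
    (contDiffAt_const.mul contDiffAt_id).mul (hsin.pow 2)
  have hgne : L ^ 2 * u * Real.sin (Real.pi * Real.log u / (2 * L)) ^ 2 ≠ 0 := by positivity
  have hq : ContDiffAt ℝ 2
      (fun u : ℝ => Real.pi ^ 2 / (L ^ 2 * u * Real.sin (Real.pi * Real.log u / (2 * L)) ^ 2)) u :=
    contDiffAt_const.div hg hgne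
  have hqne : Real.pi ^ 2 / (L ^ 2 * u * Real.sin (Real.pi * Real.log u / (2 * L)) ^ 2) ≠ 0 := by
    positivity
  exact (Real.contDiffAt_log.2 hqne).comp u hq

lemma contDiff_sq_line : ContDiff ℝ 2 (fun w : ℂ => w.re ^ 2 + w.im ^ 2) := by
  have h1 : ContDiff ℝ 2 (fun w : ℂ => w.re) := Complex.reCLM.contDiff
  have h2 : ContDiff ℝ 2 (fun w : ℂ => w.im) := Complex.imCLM.contDiff
  exact (h1.pow 2).add (h2.pow 2)

lemma contDiffOn_omegaL {L : ℝ} (hL : 0 < L) :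
    ContDiffOn ℝ 2 (omegaL L) (annulusSet L) := by
  intro z hz
  apply ContDiffAt.contDiffWithinAt
  have hat : ContDiffAt ℝ 2 (fun w : ℂ => Ffun L (w.re ^ 2 + w.im ^ 2)) z :=
    (contDiffAt_F hL (abs_sq_mem hz)).comp (g := Ffun L) (f := fun w : ℂ => w.re ^ 2 + w.im ^ 2) z contDiff_sq_line.contDiffAt
  apply hat.congr_of_eventuallyEq
  filter_upwards [(isOpen_annulusSet L).mem_nhds hz] with w hw
  exact omegaL_eq_F hw

/-- Second derivative test at an interior local maximum. -/
lemma deriv_nonpos_of_localmax {g h : ℝ → ℝ}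
    (hg : ∀ᶠ t in nhds (0:ℝ), HasDerivAt g (h t) t)
    (hh : DifferentiableAt ℝ h 0) (hmax : IsLocalMax g 0) : deriv h 0 ≤ 0 := by
  by_contra hc
  push_neg at hc
  have h0 : h 0 = 0 := by
    rw [← (hg.self_of_nhds).deriv]
    exact hmax.deriv_eq_zero
  have hslope : Filter.Tendsto (slope h 0) (nhdsWithin 0 {(0:ℝ)}ᶜ) (nhds (deriv h 0)) :=
    hasDerivAt_iff_tendsto_slope.1 hh.hasDerivAt
  have hev1 : ∀ᶠ t in nhdsWithin 0 {(0:ℝ)}ᶜ, 0 < slope h 0 t :=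
    hslope.eventually (eventually_gt_nhds hc)
  rw [eventually_nhdsWithin_iff] at hev1
  obtain ⟨ε, hε, hball⟩ := Metric.eventually_nhds_iff.1 (hev1.and (hg.and hmax))
  set ε' := ε / 2 with hε'
  have hε'pos : 0 < ε' := by positivity
  have hmem : ∀ t ∈ Set.Icc (0:ℝ) ε', dist t 0 < ε := by
    intro t ht
    rw [Real.dist_eq, sub_zero, abs_of_nonneg ht.1]
    have := ht.2
    simp only [hε'] at this ⊢
    linarith
  have hcont : ContinuousOn g (Set.Icc (0:ℝ) ε') := by
    intro t ht
    exact ((hball (hmem t ht)).2.1).continuousAt.continuousWithinAt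
  have hderivpos : ∀ t ∈ interior (Set.Icc (0:ℝ) ε'), 0 < deriv g t := by
    intro t ht
    rw [interior_Icc] at ht
    have hd := (hball (hmem t ⟨le_of_lt ht.1, le_of_lt ht.2⟩))
    have htne : t ∈ ({(0:ℝ)}ᶜ : Set ℝ) := by
      simp only [Set.mem_compl_iff, Set.mem_singleton_iff]
      exact ne_of_gt ht.1
    have hsl := hd.1 htne
    rw [slope_def_field, h0, sub_zero, sub_zero] at hsl
    have hht : 0 < h t := by
      have := mul_pos hsl ht.1
      rwa [div_mul_cancel₀ _ (ne_of_gt ht.1)] at this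
    rw [hd.2.1.deriv]
    exact hht
  have hmono := strictMonoOn_of_deriv_pos (convex_Icc (0:ℝ) ε') hcont hderivpos
  have hlt : g 0 < g ε' :=
    hmono (Set.left_mem_Icc.2 (le_of_lt hε'pos)) (Set.right_mem_Icc.2 (le_of_lt hε'pos)) hε'pos
  have hle : g ε' ≤ g 0 := (hball (hmem ε' (Set.right_mem_Icc.2 (le_of_lt hε'pos)))).2.2
  linarith

lemma lineDeriv2_eq_deriv_fderiv {f : ℂ → ℝ} {U : Set ℂ} (hU : IsOpen U) {z₀ : ℂ} (hz₀ : z₀ ∈ U)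
    (hdiff : ∀ w ∈ U, DifferentiableAt ℝ f w) (v : ℂ) :
    lineDeriv ℝ (fun w => lineDeriv ℝ f w v) z₀ v =
      deriv (fun t : ℝ => fderiv ℝ f (z₀ + t • v) v) 0 := by
  show deriv (fun t : ℝ => lineDeriv ℝ f (z₀ + t • v) v) 0 = _
  apply Filter.EventuallyEq.deriv_eq
  filter_upwards [line_mem_nhds hU hz₀] with t ht
  exact (hdiff _ ht).lineDeriv_eq_fderiv

lemma hasDerivAt_slice {f : ℂ → ℝ} (z₀ v : ℂ) {t : ℝ}
    (hdiff : DifferentiableAt ℝ f (z₀ + t • v)) :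
    HasDerivAt (fun t : ℝ => f (z₀ + t • v)) (fderiv ℝ f (z₀ + t • v) v) t := by
  have hline : HasDerivAt (fun t : ℝ => z₀ + t • v) v t := by
    simpa using ((hasDerivAt_id t).smul_const v).const_add z₀
  exact hdiff.hasFDerivAt.comp_hasDerivAt t hline

lemma differentiableAt_fderiv_slice {f : ℂ → ℝ} {U : Set ℂ} (hU : IsOpen U) {z₀ : ℂ}
    (hz₀ : z₀ ∈ U) (hf : ContDiffOn ℝ 2 f U) (v : ℂ) :
    DifferentiableAt ℝ (fun t : ℝ => fderiv ℝ f (z₀ + t • v) v) 0 := by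
  have h1 : ContDiffOn ℝ 1 (fderiv ℝ f) U := hf.fderiv_of_isOpen hU (by norm_num)
  have h0 : z₀ + (0:ℝ) • v = z₀ := by simp
  have h2 : DifferentiableAt ℝ (fderiv ℝ f) (z₀ + (0:ℝ) • v) := by
    rw [h0]
    exact (h1.differentiableOn one_ne_zero).differentiableAt (hU.mem_nhds hz₀)
  have hline : DifferentiableAt ℝ (fun t : ℝ => z₀ + t • v) 0 := by
    have : HasDerivAt (fun t : ℝ => z₀ + t • v) v 0 := by
      simpa using ((hasDerivAt_id (0:ℝ)).smul_const v).const_add z₀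
    exact this.differentiableAt
  have h3 : DifferentiableAt ℝ (fun t : ℝ => fderiv ℝ f (z₀ + t • v)) 0 :=
    h2.comp 0 hline
  exact h3.clm_apply (differentiableAt_const v)

lemma lineDeriv2_nonpos_at_max {f : ℂ → ℝ} {U : Set ℂ} (hU : IsOpen U) {z₀ : ℂ} (hz₀ : z₀ ∈ U)
    (hf : ContDiffOn ℝ 2 f U) (hmax : ∀ w ∈ U, f w ≤ f z₀) (v : ℂ) :
    lineDeriv ℝ (fun w => lineDeriv ℝ f w v) z₀ v ≤ 0 := by
  have hdiffU : ∀ w ∈ U, DifferentiableAt ℝ f w := fun w hw =>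
    (hf.differentiableOn (by norm_num)).differentiableAt (hU.mem_nhds hw)
  rw [lineDeriv2_eq_deriv_fderiv hU hz₀ hdiffU v]
  apply deriv_nonpos_of_localmax (g := fun t : ℝ => f (z₀ + t • v))
  · filter_upwards [line_mem_nhds hU hz₀] with t ht
    exact hasDerivAt_slice z₀ v (hdiffU _ ht)
  · exact differentiableAt_fderiv_slice hU hz₀ hf v
  · filter_upwards [line_mem_nhds hU hz₀] with t ht
    simpa using hmax _ ht

lemma lap_nonpos_at_max {f : ℂ → ℝ} {U : Set ℂ} (hU : IsOpen U) {z₀ : ℂ} (hz₀ : z₀ ∈ U)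
    (hf : ContDiffOn ℝ 2 f U) (hmax : ∀ w ∈ U, f w ≤ f z₀) : lap f z₀ ≤ 0 :=
  add_nonpos (lineDeriv2_nonpos_at_max hU hz₀ hf hmax 1)
    (lineDeriv2_nonpos_at_max hU hz₀ hf hmax Complex.I)

lemma lineDeriv2_sub {f g : ℂ → ℝ} {U : Set ℂ} (hU : IsOpen U) {z₀ : ℂ} (hz₀ : z₀ ∈ U)
    (hf : ContDiffOn ℝ 2 f U) (hg : ContDiffOn ℝ 2 g U) (v : ℂ) :
    lineDeriv ℝ (fun w => lineDeriv ℝ (fun x => f x - g x) w v) z₀ v =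
      lineDeriv ℝ (fun w => lineDeriv ℝ f w v) z₀ v -
        lineDeriv ℝ (fun w => lineDeriv ℝ g w v) z₀ v := by
  have hdf : ∀ w ∈ U, DifferentiableAt ℝ f w := fun w hw =>
    (hf.differentiableOn (by norm_num)).differentiableAt (hU.mem_nhds hw)
  have hdg : ∀ w ∈ U, DifferentiableAt ℝ g w := fun w hw =>
    (hg.differentiableOn (by norm_num)).differentiableAt (hU.mem_nhds hw)
  have hdfg : ∀ w ∈ U, DifferentiableAt ℝ (fun x => f x - g x) w := fun w hw =>
    (hdf w hw).sub (hdg w hw)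
  rw [lineDeriv2_eq_deriv_fderiv hU hz₀ hdf v, lineDeriv2_eq_deriv_fderiv hU hz₀ hdg v,
    lineDeriv2_eq_deriv_fderiv hU hz₀ hdfg v]
  have hev : (fun t : ℝ => fderiv ℝ (fun x => f x - g x) (z₀ + t • v) v) =ᶠ[nhds 0]
      fun t => fderiv ℝ f (z₀ + t • v) v - fderiv ℝ g (z₀ + t • v) v := by
    filter_upwards [line_mem_nhds hU hz₀] with t ht
    rw [fderiv_fun_sub (hdf _ ht) (hdg _ ht)]
    simp
  rw [hev.deriv_eq]
  exact deriv_sub (differentiableAt_fderiv_slice hU hz₀ hf v)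
    (differentiableAt_fderiv_slice hU hz₀ hg v)

lemma lap_sub_s3 {f g : ℂ → ℝ} {U : Set ℂ} (hU : IsOpen U) {z₀ : ℂ} (hz₀ : z₀ ∈ U)
    (hf : ContDiffOn ℝ 2 f U) (hg : ContDiffOn ℝ 2 g U) :
    lap (fun x => f x - g x) z₀ = lap f z₀ - lap g z₀ := by
  unfold lap
  rw [lineDeriv2_sub hU hz₀ hf hg 1, lineDeriv2_sub hU hz₀ hf hg Complex.I]
  ring

lemma omegaL_lower {L : ℝ} (hL : 0 < L) {z : ℂ} (hz : z ∈ annulusSet L) :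
    -2 * Real.log (min (-(Real.log (‖z‖))) (Real.log (‖z‖) + L)) ≤
      omegaL L z := by
  have hlz := log_abs_mem hz
  have habs := abs_pos_of_mem hz
  have hsne : Real.sin (Real.pi * Real.log (‖z‖) / L) ≠ 0 :=
    ne_of_lt (sin_theta_neg hL hz)
  set t := Real.log (‖z‖) with htdef
  set m := min (-t) (t + L) with hmdef
  have hmpos : 0 < m := lt_min (by linarith [hlz.2]) (by linarith [hlz.1])
  have hπ := Real.pi_pos
  have hsin_le : |Real.sin (Real.pi * t / L)| ≤ Real.pi * m / L := by
    rcases le_total (-t) (t + L) with h | h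
    · calc |Real.sin (Real.pi * t / L)| ≤ |Real.pi * t / L| := Real.abs_sin_le_abs
        _ = Real.pi * (-t) / L := by
            rw [abs_div, abs_mul, abs_of_pos hπ, abs_of_pos hL, abs_of_neg hlz.2]
        _ = Real.pi * m / L := by rw [hmdef, min_eq_left h]
    · have heq : Real.pi * t / L = Real.pi * (t + L) / L - Real.pi := by
        field_simp
        ring
      calc |Real.sin (Real.pi * t / L)| = |Real.sin (Real.pi * (t + L) / L - Real.pi)| := by
            rw [heq]
        _ = |Real.sin (Real.pi * (t + L) / L)| := by rw [Real.sin_sub_pi, abs_neg]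
        _ ≤ |Real.pi * (t + L) / L| := Real.abs_sin_le_abs
        _ = Real.pi * (t + L) / L := abs_of_nonneg (by
            have : 0 < t + L := by linarith [hlz.1]
            positivity)
        _ = Real.pi * m / L := by rw [hmdef, min_eq_right h]
  have h1 : Real.sin (Real.pi * t / L) ^ 2 ≤ (Real.pi * m / L) ^ 2 := by
    rw [← sq_abs (Real.sin (Real.pi * t / L))]
    exact pow_le_pow_left₀ (abs_nonneg _) hsin_le 2
  have h2 : ‖z‖ ^ 2 ≤ 1 := by nlinarith [hz.2, habs]
  have h3 : ‖z‖ ^ 2 * Real.sin (Real.pi * t / L) ^ 2 ≤ (Real.pi * m / L) ^ 2 := by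
    calc ‖z‖ ^ 2 * Real.sin (Real.pi * t / L) ^ 2 ≤ 1 * (Real.pi * m / L) ^ 2 :=
          mul_le_mul h2 h1 (sq_nonneg _) zero_le_one
      _ = (Real.pi * m / L) ^ 2 := one_mul _
  have h5 : L ^ 2 * (Real.pi * m / L) ^ 2 = Real.pi ^ 2 * m ^ 2 := by
    field_simp
  have key : L ^ 2 * ‖z‖ ^ 2 * Real.sin (Real.pi * t / L) ^ 2 ≤
      Real.pi ^ 2 * m ^ 2 := by
    have h4 := mul_le_mul_of_nonneg_left h3 (sq_nonneg L)
    calc L ^ 2 * ‖z‖ ^ 2 * Real.sin (Real.pi * t / L) ^ 2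
        = L ^ 2 * (‖z‖ ^ 2 * Real.sin (Real.pi * t / L) ^ 2) := by ring
      _ ≤ L ^ 2 * (Real.pi * m / L) ^ 2 := h4
      _ = Real.pi ^ 2 * m ^ 2 := h5
  have hdenpos : 0 < L ^ 2 * ‖z‖ ^ 2 * Real.sin (Real.pi * t / L) ^ 2 := by
    positivity
  have hineq : (m ^ 2)⁻¹ ≤ Real.pi ^ 2 /
      (L ^ 2 * ‖z‖ ^ 2 * Real.sin (Real.pi * t / L) ^ 2) := by
    rw [inv_eq_one_div, div_le_div_iff₀ (by positivity) hdenpos]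
    linarith [key]
  have hlogeq : -2 * Real.log m = Real.log ((m ^ 2)⁻¹) := by
    rw [Real.log_inv, Real.log_pow]
    push_cast
    ring
  rw [hlogeq]
  exact Real.log_le_log (by positivity) hineq

lemma isCompact_capped {a b : ℝ} (hb : b ≤ 1) :
    IsCompact {z : ℂ | a ≤ ‖z‖ ∧ ‖z‖ ≤ b} := by
  apply IsCompact.of_isClosed_subset (isCompact_closedBall (0:ℂ) 1)
  · have : {z : ℂ | a ≤ ‖z‖ ∧ ‖z‖ ≤ b} =
        (fun z : ℂ => ‖z‖) ⁻¹' (Set.Icc a b) := rfl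
    rw [this]
    exact isClosed_Icc.preimage continuous_norm
  · intro w hw
    rw [Metric.mem_closedBall, dist_zero_right]
    exact le_trans hw.2 hb

/-- Any solution of the Liouville equation on the annulus `A_L` which is continuous up to the
closed annulus is bounded above by the explicit hyperbolic conformal factor `ω_L`,
i.e. `e^ω ≤ π²/(L² |z|² sin²(π log|z|/L))`. -/
theorem liouville_solution_le_omegaL (L : ℝ) (hL : 0 < L) (ω : ℂ → ℝ)
    (hcont : ContinuousOn ω {z : ℂ | Real.exp (-L) ≤ ‖z‖ ∧ ‖z‖ ≤ 1})
    (hC2 : ContDiffOn ℝ 2 ω (annulusSet L))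
    (heq : ∀ z ∈ annulusSet L, lap ω z = 2 * Real.exp (ω z)) :
    ∀ z ∈ annulusSet L,
      ω z ≤ omegaL L z ∧
      Real.exp (ω z) ≤ Real.pi ^ 2 / (L ^ 2 * ‖z‖ ^ 2 *
        Real.sin (Real.pi * Real.log (‖z‖) / L) ^ 2) := by
  have main : ∀ z ∈ annulusSet L, ω z ≤ omegaL L z := by
    intro z hz
    by_contra hlt
    push_neg at hlt
    set S := {w : ℂ | Real.exp (-L) ≤ ‖w‖ ∧ ‖w‖ ≤ 1} with hS
    have hSc : IsCompact S := isCompact_capped le_rfl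
    have hzS : z ∈ S := ⟨le_of_lt hz.1, le_of_lt hz.2⟩
    obtain ⟨zM, hzM, hMax⟩ := hSc.exists_isMaxOn ⟨z, hzS⟩ hcont
    set M := ω zM with hMdef
    have hMb : ∀ w ∈ S, ω w ≤ M := fun w hw => hMax hw
    have hlz := log_abs_mem hz
    set ε := min (Real.exp (-(M/2)))
      (min (-(Real.log (‖z‖))) (Real.log (‖z‖) + L)) with hεdef
    have hεpos : 0 < ε :=
      lt_min (Real.exp_pos _) (lt_min (by linarith [hlz.2]) (by linarith [hlz.1]))
    have hεM : M ≤ -2 * Real.log ε := by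
      have h1 : Real.log ε ≤ -(M/2) := by
        calc Real.log ε ≤ Real.log (Real.exp (-(M/2))) :=
              Real.log_le_log hεpos (min_le_left _ _)
          _ = -(M/2) := Real.log_exp _
      linarith
    set K := {w : ℂ | Real.exp (ε - L) ≤ ‖w‖ ∧ ‖w‖ ≤ Real.exp (-ε)}
      with hKdef
    have hKA : K ⊆ annulusSet L := by
      intro w hw
      constructor
      · exact lt_of_lt_of_le (Real.exp_lt_exp.2 (by linarith)) hw.1
      · refine lt_of_le_of_lt hw.2 ?_
        rw [← Real.exp_zero]
        exact Real.exp_lt_exp.2 (by linarith)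
    have hKS : K ⊆ S := fun w hw => ⟨le_of_lt (hKA hw).1, le_of_lt (hKA hw).2⟩
    have hKc : IsCompact K := isCompact_capped (Real.exp_le_one_iff.2 (by linarith))
    have hzK : z ∈ K := by
      have hε2 : ε ≤ -(Real.log (‖z‖)) :=
        le_trans (min_le_right _ _) (min_le_left _ _)
      have hε3 : ε ≤ Real.log (‖z‖) + L :=
        le_trans (min_le_right _ _) (min_le_right _ _)
      constructor
      · rw [← Real.exp_log (abs_pos_of_mem hz)]
        exact Real.exp_le_exp.2 (by linarith)
      · rw [← Real.exp_log (abs_pos_of_mem hz)]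
        exact Real.exp_le_exp.2 (by linarith)
    set φ := fun w => ω w - omegaL L w with hφdef
    have hφcont : ContinuousOn φ K :=
      (hcont.mono hKS).sub (((contDiffOn_omegaL hL).continuousOn).mono hKA)
    obtain ⟨z₀, hz₀K, hmax₀⟩ := hKc.exists_isMaxOn ⟨z, hzK⟩ hφcont
    have hmax₀' : ∀ w ∈ K, φ w ≤ φ z₀ := fun w hw => hmax₀ hw
    have hz₀A : z₀ ∈ annulusSet L := hKA hz₀K
    have hφz : 0 < φ z := by
      simp only [hφdef]
      linarith
    have hφz₀ : 0 < φ z₀ := lt_of_lt_of_le hφz (hmax₀' z hzK)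
    have hglobal : ∀ w ∈ annulusSet L, φ w ≤ φ z₀ := by
      intro w hw
      by_cases hwK : w ∈ K
      · exact hmax₀' w hwK
      · have hlw := log_abs_mem hw
        have hwpos := abs_pos_of_mem hw
        set m := min (-(Real.log (‖w‖))) (Real.log (‖w‖) + L) with hmdef
        have hmpos : 0 < m := lt_min (by linarith [hlw.2]) (by linarith [hlw.1])
        have hmlt : m < ε := by
          simp only [hKdef, Set.mem_setOf_eq, not_and_or, not_le] at hwK
          rcases hwK with h | h
          · have hh : Real.log (‖w‖) < ε - L := by
              have := Real.log_lt_log hwpos h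
              rwa [Real.log_exp] at this
            calc m ≤ Real.log (‖w‖) + L := min_le_right _ _
              _ < ε := by linarith
          · have hh : -ε < Real.log (‖w‖) := by
              have := Real.log_lt_log (Real.exp_pos _) h
              rwa [Real.log_exp] at this
            calc m ≤ -(Real.log (‖w‖)) := min_le_left _ _
              _ < ε := by linarith
        have h1 : -2 * Real.log m ≤ omegaL L w := omegaL_lower hL hw
        have h2 : -2 * Real.log ε < -2 * Real.log m := by
          have := Real.log_lt_log hmpos hmlt
          linarith
        have h3 : ω w ≤ M := hMb w ⟨le_of_lt hw.1, le_of_lt hw.2⟩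
        have h4 : φ w ≤ 0 := by
          simp only [hφdef]
          linarith
        linarith
    have hφC2 : ContDiffOn ℝ 2 φ (annulusSet L) := hC2.sub (contDiffOn_omegaL hL)
    have hlapφ : lap φ z₀ ≤ 0 :=
      lap_nonpos_at_max (isOpen_annulusSet L) hz₀A hφC2 hglobal
    have hlapeq : lap φ z₀ = lap ω z₀ - lap (omegaL L) z₀ :=
      lap_sub_s3 (isOpen_annulusSet L) hz₀A hC2 (contDiffOn_omegaL hL)
    have h4 : lap ω z₀ = 2 * Real.exp (ω z₀) := heq z₀ hz₀A
    have h5 : lap (omegaL L) z₀ = 2 * Real.exp (omegaL L z₀) := lap_omegaL hL hz₀A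
    have h6 : Real.exp (omegaL L z₀) < Real.exp (ω z₀) := by
      apply Real.exp_lt_exp.2
      have := hφz₀
      simp only [hφdef] at this
      linarith
    rw [hlapeq, h4, h5] at hlapφ
    linarith
  intro z hz
  refine ⟨main z hz, ?_⟩
  calc Real.exp (ω z) ≤ Real.exp (omegaL L z) := Real.exp_le_exp.2 (main z hz)
    _ = _ := exp_omegaL hL hz
end

section
/- For every L > 0 and all a, b with e^{−L} < a < b < 1, the area of the sub-annulus {a < |z| < b} in the metric e^{ω_L}(dx²+dy²) is given by ∫_{{a < |z| < b}} e^{ω_L(z)} dA(z) = (2π²/L) · ( cot(π log a / L) − cot(π log b / L) ), where dA denotes two-dimensional Lebesgue measure. -/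
open MeasureTheory

lemma hasDerivAt_cot' {t : ℝ} (h : Real.sin t ≠ 0) :
    HasDerivAt Real.cot (-(1 / Real.sin t ^ 2)) t := by
  have hd := (Real.hasDerivAt_cos t).div (Real.hasDerivAt_sin t) h
  have heq : (Real.cos / Real.sin) = Real.cot := by
    funext x; rw [Real.cot_eq_cos_div_sin]; rfl
  rw [heq] at hd
  refine hd.congr_deriv ?_
  have h1 : -Real.sin t * Real.sin t - Real.cos t * Real.cos t = -1 := by
    nlinarith [Real.sin_sq_add_cos_sq t]
  rw [h1]; ring

lemma sin_ne_zero_of (L r : ℝ) (hL : 0 < L) (h1 : Real.exp (-L) < r) (h2 : r < 1) :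
    Real.sin (Real.pi * Real.log r / L) ≠ 0 := by
  have hr0 : 0 < r := (Real.exp_pos _).trans h1
  have hlog1 : Real.log r < 0 := Real.log_neg hr0 h2
  have hlog2 : -L < Real.log r := by
    rw [← Real.log_exp (-L)]; exact Real.log_lt_log (Real.exp_pos _) h1
  have hpi := Real.pi_pos
  have ht1 : Real.pi * Real.log r / L < 0 :=
    div_neg_of_neg_of_pos (mul_neg_of_pos_of_neg hpi hlog1) hL
  have ht2 : -Real.pi < Real.pi * Real.log r / L := by
    rw [lt_div_iff₀ hL]; nlinarith
  exact ne_of_lt (Real.sin_neg_of_neg_of_neg_pi_lt ht1 ht2)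

/-- For `e^{-L} < a < b < 1`, the hyperbolic area of the sub-annulus `{a < |z| < b}` in the
metric `e^{ω_L}(dx²+dy²)` equals `(2π²/L)(cot(π log a / L) − cot(π log b / L))`. -/
theorem omegaL_area (L a b : ℝ) (hL : 0 < L)
    (ha : Real.exp (-L) < a) (hab : a < b) (hb : b < 1) :
    ∫ z in {z : ℂ | a < ‖z‖ ∧ ‖z‖ < b}, Real.exp (omegaL L z) =
      (2 * Real.pi ^ 2 / L) *
        (Real.cot (Real.pi * Real.log a / L) - Real.cot (Real.pi * Real.log b / L)) := by
  have hpi := Real.pi_pos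
  have ha0 : 0 < a := (Real.exp_pos _).trans ha
  set g : ℝ → ℝ := fun r =>
    Real.pi ^ 2 / (L ^ 2 * r ^ 2 * Real.sin (Real.pi * Real.log r / L) ^ 2) with hg
  set S : Set ℂ := {z : ℂ | a < ‖z‖ ∧ ‖z‖ < b} with hSdef
  have hS : MeasurableSet S := by
    have : S = (fun z : ℂ => ‖z‖) ⁻¹' Set.Ioo a b := rfl
    rw [this]; exact continuous_norm.measurable measurableSet_Ioo
  have hsin : ∀ r : ℝ, a ≤ r → r ≤ b → Real.sin (Real.pi * Real.log r / L) ≠ 0 := fun r h1 h2 =>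
    sin_ne_zero_of L r hL (ha.trans_le h1) (lt_of_le_of_lt h2 hb)
  have stepA : ∫ z in S, Real.exp (omegaL L z) = ∫ z in S, g (‖z‖) := by
    apply setIntegral_congr_fun hS
    intro z hz
    obtain ⟨h1, h2⟩ := hz
    have habs : 0 < ‖z‖ := ha0.trans h1
    have hs := hsin _ h1.le h2.le
    simp only [omegaL, hg]
    apply Real.exp_log
    positivity
  have stepB : ∫ z in S, g (‖z‖) = 2 * Real.pi * ∫ y in Set.Ioo a b, y * g y := by
    rw [← MeasureTheory.integral_indicator hS]
    have h1 : ∀ z : ℂ, Set.indicator S (fun z => g (‖z‖)) z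
        = (Set.indicator (Set.Ioo a b) g) ‖z‖ := by
      intro z
      by_cases hz : z ∈ S
      · rw [Set.indicator_of_mem hz, Set.indicator_of_mem]
        exact ⟨hz.1, hz.2⟩
      · rw [Set.indicator_of_notMem hz, Set.indicator_of_notMem]
        intro hmem
        exact hz ⟨hmem.1, hmem.2⟩
    simp_rw [h1]
    rw [MeasureTheory.integral_fun_norm_addHaar volume (Set.indicator (Set.Ioo a b) g)]
    have hdim : Module.finrank ℝ ℂ = 2 := Complex.finrank_real_complex
    rw [hdim]
    have hvol : (volume (Metric.ball (0:ℂ) 1)).toReal = Real.pi := by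
      rw [Complex.volume_ball]
      simp [NNReal.coe_real_pi]
    rw [measureReal_def, hvol]
    have hIoi : ∫ y in Set.Ioi (0:ℝ), y ^ (2 - 1) • Set.indicator (Set.Ioo a b) g y
        = ∫ y in Set.Ioo a b, y * g y := by
      have : ∀ y : ℝ, y ^ (2 - 1) • Set.indicator (Set.Ioo a b) g y
          = Set.indicator (Set.Ioo a b) (fun y => y * g y) y := by
        intro y
        norm_num
        by_cases hy : y ∈ Set.Ioo a b
        · rw [Set.indicator_of_mem hy, Set.indicator_of_mem hy]
        · rw [Set.indicator_of_notMem hy, Set.indicator_of_notMem hy, mul_zero]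
      simp_rw [this]
      rw [setIntegral_indicator measurableSet_Ioo]
      congr 1
      rw [Set.inter_eq_right.mpr]
      intro y hy
      exact ha0.trans hy.1
    rw [hIoi]
    push_cast [nsmul_eq_mul, smul_eq_mul]
    ring
  have stepE : ∫ y in Set.Ioo a b, y * g y
      = Real.pi / L * (Real.cot (Real.pi * Real.log a / L)
        - Real.cot (Real.pi * Real.log b / L)) := by
    rw [← MeasureTheory.integral_Ioc_eq_integral_Ioo, ← intervalIntegral.integral_of_le hab.le]
    have key : ∫ y in a..b, y * g y
        = (fun y => -(Real.pi / L) * Real.cot (Real.pi * Real.log y / L)) b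
          - (fun y => -(Real.pi / L) * Real.cot (Real.pi * Real.log y / L)) a := by
      apply intervalIntegral.integral_eq_sub_of_hasDerivAt
      · intro y hy
        rw [Set.uIcc_of_le hab.le] at hy
        obtain ⟨h1, h2⟩ := hy
        have hy0 : 0 < y := ha0.trans_le h1
        have hs := hsin y h1 h2
        have hu : HasDerivAt (fun y : ℝ => Real.pi * Real.log y / L)
            (Real.pi * y⁻¹ / L) y :=
          ((Real.hasDerivAt_log hy0.ne').const_mul Real.pi).div_const L
        have hc := (hasDerivAt_cot' hs).comp y hu
        have h3 := hc.const_mul (-(Real.pi / L))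
        have harit : -(Real.pi / L) * (-(1 / Real.sin (Real.pi * Real.log y / L) ^ 2)
            * (Real.pi * y⁻¹ / L)) = y * g y := by
          rw [hg]
          field_simp
        exact harit ▸ h3
      · apply ContinuousOn.intervalIntegrable
        intro y hy
        rw [Set.uIcc_of_le hab.le] at hy
        obtain ⟨h1, h2⟩ := hy
        have hy0 : 0 < y := ha0.trans_le h1
        have hs := hsin y h1 h2
        apply ContinuousAt.continuousWithinAt
        have hden : ContinuousAt
            (fun y : ℝ => L ^ 2 * y ^ 2 * Real.sin (Real.pi * Real.log y / L) ^ 2) y := by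
          apply ContinuousAt.mul
          · exact continuousAt_const.mul (continuousAt_id.pow 2)
          · exact (Real.continuous_sin.continuousAt.comp
              (((Real.continuousAt_log hy0.ne').const_mul Real.pi).div_const L)).pow 2
        have hden0 : L ^ 2 * y ^ 2 * Real.sin (Real.pi * Real.log y / L) ^ 2 ≠ 0 := by
          positivity
        exact continuousAt_id.mul (continuousAt_const.div hden hden0)
    rw [key]
    ring
  rw [stepA, stepB, stepE]
  field_simp
end

section
/- For every fixed ε ∈ (0, 2), the area in the metric e^{ω_L}(dx²+dy²) of the region between the middle circle and the circle of radius ε/2 converges as L → ∞: lim_{L→∞} ∫_{{e^{−L/2} < |z| < ε/2}} e^{ω_L(z)} dA(z) = 2π / log(2/ε), where dA denotes two-dimensional Lebesgue measure. -/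
open MeasureTheory

section Aux

open Filter Real Set

private lemma omegaL_lim (c : ℝ) (hc : 0 < c) :
    Tendsto (fun L : ℝ => 2*π*((π/L) * (Real.cos (π*c/L)/Real.sin (π*c/L))))
      atTop (nhds (2*π/c)) := by
  have hπ := Real.pi_pos
  have hT : Tendsto (fun x : ℝ => x * (Real.cos x / Real.sin x)) (nhdsWithin 0 {(0:ℝ)}ᶜ)
      (nhds 1) := by
    have h1 : Tendsto (slope Real.sin 0) (nhdsWithin 0 {(0:ℝ)}ᶜ) (nhds 1) := by
      have := hasDerivAt_iff_tendsto_slope.mp (Real.hasDerivAt_sin 0)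
      simpa using this
    have h2 := h1.inv₀ (one_ne_zero)
    have h3 : Tendsto Real.cos (nhdsWithin 0 {(0:ℝ)}ᶜ) (nhds 1) := by
      simpa using (Real.continuous_cos.tendsto 0).mono_left nhdsWithin_le_nhds
    have := h2.mul h3
    simp only [inv_one, one_mul] at this
    refine this.congr fun x => ?_
    rw [slope_def_field]
    simp only [Real.sin_zero, sub_zero]
    rw [inv_div]
    ring
  have hx : Tendsto (fun L : ℝ => π*c/L) atTop (nhdsWithin 0 {(0:ℝ)}ᶜ) := by
    refine tendsto_nhdsWithin_of_tendsto_nhds_of_eventually_within _ ?_ ?_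
    · exact tendsto_const_nhds.div_atTop tendsto_id
    · filter_upwards [eventually_gt_atTop 0] with L hL
      exact (ne_of_gt (by positivity) : (π*c/L : ℝ) ≠ 0)
  have := ((hT.comp hx).const_mul (2*π/c))
  rw [mul_one] at this
  refine this.congr' ?_
  filter_upwards [eventually_gt_atTop 0] with L hL
  have hL0 : L ≠ 0 := ne_of_gt hL
  have hc0 : c ≠ 0 := ne_of_gt hc
  simp only [Function.comp_apply]
  field_simp

private lemma omegaL_key (ε : ℝ) (hε₀ : 0 < ε) (hε₂ : ε < 2) (L : ℝ)
    (hL : 2 * Real.log (2/ε) < L) :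
    (∫ z in {z : ℂ | Real.exp (-L / 2) < ‖z‖ ∧ ‖z‖ < ε / 2},
      Real.exp (omegaL L z)) =
    2*π*((π/L) * (Real.cos (π*Real.log (2/ε)/L)/Real.sin (π*Real.log (2/ε)/L))) := by
  have hπ := Real.pi_pos
  set c := Real.log (2/ε) with hc_def
  have hc : 0 < c := Real.log_pos (by rw [lt_div_iff₀ hε₀]; linarith)
  have hL0 : 0 < L := by linarith
  set a := Real.exp (-L/2) with ha_def
  set b := ε/2 with hb_def
  have ha0 : 0 < a := Real.exp_pos _
  have hb0 : 0 < b := by positivity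
  have hlogb : Real.log b = -c := by
    rw [hb_def, hc_def, Real.log_div (ne_of_gt hε₀) (by norm_num),
      Real.log_div (by norm_num) (ne_of_gt hε₀)]
    ring
  have hloga : Real.log a = -L/2 := Real.log_exp _
  have hab : a < b := by
    rw [ha_def, ← Real.exp_log hb0, Real.exp_lt_exp, hlogb]
    linarith
  -- sin is negative (hence nonzero) on [a, b]
  have hsin : ∀ r ∈ Icc a b, Real.sin (π * Real.log r / L) < 0 := by
    intro r hr
    have hr0 : 0 < r := lt_of_lt_of_le ha0 hr.1
    have h1 : Real.log r ≤ -c := by rw [← hlogb]; exact Real.log_le_log hr0 hr.2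
    have h2 : -L/2 ≤ Real.log r := by rw [← hloga]; exact Real.log_le_log ha0 hr.1
    apply Real.sin_neg_of_neg_of_neg_pi_lt
    · exact div_neg_of_neg_of_pos (by nlinarith) hL0
    · have h3 : -π/2 ≤ π * Real.log r / L := by rw [le_div_iff₀ hL0]; nlinarith
      linarith
  -- the radial integrand
  set X : ℝ → ℝ := fun r => π^2 / (L^2 * r^2 * Real.sin (π * Real.log r / L)^2) with hX_def
  have hXpos : ∀ r ∈ Icc a b, 0 < X r := by
    intro r hr
    have hr0 : 0 < r := lt_of_lt_of_le ha0 hr.1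
    have := hsin r hr
    have hs : Real.sin (π * Real.log r / L) ≠ 0 := ne_of_lt this
    rw [hX_def]
    positivity
  set g : ℝ → ℝ := Set.indicator (Ioo a b) X with hg_def
  set S : Set ℂ := {z : ℂ | Real.exp (-L / 2) < ‖z‖ ∧ ‖z‖ < ε / 2} with hS_def
  have hS : MeasurableSet S := continuous_norm.measurable measurableSet_Ioo
  have hmem : ∀ z : ℂ, z ∈ S ↔ ‖z‖ ∈ Ioo a b := fun z => Iff.rfl
  have step1 : (∫ z in S, Real.exp (omegaL L z)) = ∫ z : ℂ, g (‖z‖) := by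
    rw [← integral_indicator hS]
    congr 1
    funext z
    by_cases hz : ‖z‖ ∈ Ioo a b
    · rw [Set.indicator_of_mem ((hmem z).mpr hz), hg_def, Set.indicator_of_mem hz,
        omegaL, hX_def]
      exact Real.exp_log (hXpos _ (Ioo_subset_Icc_self hz))
    · rw [Set.indicator_of_notMem (fun h => hz ((hmem z).mp h)), hg_def,
        Set.indicator_of_notMem hz]
  have step2 : (∫ z : ℂ, g (‖z‖)) =
      ∫ p in Ioi (0:ℝ) ×ˢ Ioo (-π) π, p.1 * g |p.1| := by
    rw [← Complex.integral_comp_polarCoord_symm, polarCoord_target]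
    simp_rw [Complex.norm_polarCoord_symm, smul_eq_mul]
  have step3 : (∫ p in Ioi (0:ℝ) ×ˢ Ioo (-π) π, p.1 * g |p.1|) =
      (∫ r in Ioi (0:ℝ), r * g |r|) * ∫ _ in Ioo (-π) π, (1:ℝ) := by
    rw [← setIntegral_prod_mul, Measure.volume_eq_prod]
    simp_rw [mul_one]
  have step4 : (∫ _ in Ioo (-π) π, (1:ℝ)) = 2 * π := by
    simp_rw [integral_const, measureReal_restrict_apply_univ,
      Real.volume_real_Ioo, sub_neg_eq_add, ← two_mul,
      max_eq_left (by positivity : (0:ℝ) ≤ 2 * π), smul_eq_mul, mul_one]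
  have step5 : (∫ r in Ioi (0:ℝ), r * g |r|) = ∫ r in a..b, r * X r := by
    rw [intervalIntegral.integral_of_le hab.le, integral_Ioc_eq_integral_Ioo]
    have heq : ∀ r ∈ Ioi (0:ℝ), r * g |r| = Set.indicator (Ioo a b) (fun r => r * X r) r := by
      intro r hr
      rw [abs_of_pos hr]
      by_cases h : r ∈ Ioo a b
      · rw [hg_def, Set.indicator_of_mem h, Set.indicator_of_mem h]
      · rw [hg_def, Set.indicator_of_notMem h, Set.indicator_of_notMem h, mul_zero]
    rw [setIntegral_congr_fun measurableSet_Ioi heq, setIntegral_indicator measurableSet_Ioo]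
    have hinter : Ioi (0:ℝ) ∩ Ioo a b = Ioo a b :=
      Set.inter_eq_self_of_subset_right (fun r (hr : r ∈ Ioo a b) => lt_trans ha0 hr.1)
    rw [hinter]
  -- the antiderivative
  set F : ℝ → ℝ := fun r =>
    -(π/L) * (Real.cos (π * Real.log r / L) / Real.sin (π * Real.log r / L)) with hF_def
  have hderiv : ∀ r ∈ uIcc a b, HasDerivAt F (r * X r) r := by
    intro r hr
    rw [uIcc_of_le hab.le] at hr
    have hr0 : 0 < r := lt_of_lt_of_le ha0 hr.1
    have hsne : Real.sin (π * Real.log r / L) ≠ 0 := ne_of_lt (hsin r hr)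
    have hu : HasDerivAt (fun r : ℝ => π * Real.log r / L) (π * r⁻¹ / L) r :=
      ((Real.hasDerivAt_log (ne_of_gt hr0)).const_mul π).div_const L
    have hcos : HasDerivAt (fun r : ℝ => Real.cos (π * Real.log r / L))
        (-Real.sin (π * Real.log r / L) * (π * r⁻¹ / L)) r :=
      (Real.hasDerivAt_cos _).comp r hu
    have hsin' : HasDerivAt (fun r : ℝ => Real.sin (π * Real.log r / L))
        (Real.cos (π * Real.log r / L) * (π * r⁻¹ / L)) r :=
      (Real.hasDerivAt_sin _).comp r hu
    have hdiv := (hcos.div hsin' hsne).const_mul (-(π/L))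
    refine hdiv.congr_deriv ?_
    symm
    have pyth := Real.sin_sq_add_cos_sq (π * Real.log r / L)
    rw [hX_def]
    field_simp
    ring_nf
    ring_nf at pyth
    linear_combination (-1) * pyth
  have hint : IntervalIntegrable (fun r => r * X r) volume a b := by
    apply ContinuousOn.intervalIntegrable
    rw [uIcc_of_le hab.le]
    apply ContinuousOn.mul continuousOn_id
    rw [hX_def]
    apply ContinuousOn.div continuousOn_const
    · apply ContinuousOn.mul
      · exact continuousOn_const.mul (continuousOn_id.pow 2)
      · apply ContinuousOn.pow
        apply Real.continuous_sin.comp_continuousOn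
        apply ContinuousOn.div_const
        apply ContinuousOn.mul continuousOn_const
        exact Real.continuousOn_log.mono (fun r hr => ne_of_gt (lt_of_lt_of_le ha0 hr.1))
    · intro r hr
      have hsne : Real.sin (π * Real.log r / L) ≠ 0 := ne_of_lt (hsin r hr)
      have hr0 : 0 < r := lt_of_lt_of_le ha0 hr.1
      positivity
  have step6 : (∫ r in a..b, r * X r) = F b - F a :=
    intervalIntegral.integral_eq_sub_of_hasDerivAt hderiv hint
  have hFa : F a = 0 := by
    rw [hF_def]
    simp only [hloga]
    rw [show π * (-L/2) / L = -(π/2) by field_simp, Real.cos_neg, Real.cos_pi_div_two]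
    simp
  have hFb : F b = (π/L) * (Real.cos (π*c/L)/Real.sin (π*c/L)) := by
    rw [hF_def]
    simp only [hlogb]
    rw [show π * (-c) / L = -(π*c/L) by ring, Real.cos_neg, Real.sin_neg]
    field_simp
  rw [step1, step2, step3, step4, step5, step6, hFa, hFb]
  ring

end Aux

/-- For fixed `ε ∈ (0,2)`, the hyperbolic area of the region `{e^{-L/2} < |z| < ε/2}` in the
metric `e^{ω_L}(dx²+dy²)` converges to `2π / log(2/ε)` as `L → ∞`. -/
theorem omegaL_area_tendsto (ε : ℝ) (hε₀ : 0 < ε) (hε₂ : ε < 2) :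
    Filter.Tendsto
      (fun L : ℝ =>
        ∫ z in {z : ℂ | Real.exp (-L / 2) < ‖z‖ ∧ ‖z‖ < ε / 2},
          Real.exp (omegaL L z))
      Filter.atTop (nhds (2 * Real.pi / Real.log (2 / ε))) := by
  have hc : 0 < Real.log (2 / ε) := Real.log_pos (by rw [lt_div_iff₀ hε₀]; linarith)
  refine (omegaL_lim (Real.log (2/ε)) hc).congr' ?_
  filter_upwards [Filter.eventually_gt_atTop (2 * Real.log (2/ε))] with L hL
  exact (omegaL_key ε hε₀ hε₂ L hL).symm
end

section
/- Let 0 < ρ₁ ≤ ρ₂ < 1. Then there exist a constant C ∈ ℝ and L₀ > 0 such that for every L ≥ L₀ and every function ω continuous on the closed annulus {e^{−L} ≤ |z| ≤ 1}, twice continuously differentiable on A_L, and satisfying the Liouville equation Δω = 2e^{ω} on A_L, one has ω(z) ≤ C for all z with ρ₁ ≤ |z| ≤ ρ₂. In particular the bound is independent of L and of the particular solution ω. -/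
open Filter Metric

lemma lineDeriv_eq_deriv' (f : ℂ → ℝ) (x v : ℂ) :
    lineDeriv ℝ f x v = deriv (fun t : ℝ => f (x + t • v)) 0 := by
  rw [lineDeriv]

lemma helper1 (K x y2 r t : ℝ) (h : (x+t)^2 + y2 < r^2) :
    HasDerivAt (fun t => K + (-2) * Real.log (r^2 - ((x+t)^2 + y2)))
      (4*(x+t)/(r^2 - ((x+t)^2+y2))) t := by
  have hs : 0 < r^2 - ((x+t)^2 + y2) := by linarith
  have hu : HasDerivAt (fun t => r^2 - ((x+t)^2 + y2)) (-(2*(x+t))) t := by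
    have h1 : HasDerivAt (fun t : ℝ => (x+t)^2 + y2) (2*(x+t)) t := by
      have := (((hasDerivAt_id t).const_add x).pow 2).add_const y2
      refine this.congr_deriv ?_
      simp [id]
    simpa using (h1.const_sub (r^2))
  have := ((hu.log (ne_of_gt hs)).const_mul (-2)).const_add K
  refine this.congr_deriv ?_
  field_simp
  ring

lemma helper2 (x y2 r : ℝ) (h : x^2 + y2 < r^2) :
    HasDerivAt (fun t => 4*(x+t)/(r^2 - ((x+t)^2 + y2)))
      ((4*(r^2-(x^2+y2)) + 8*x^2)/(r^2-(x^2+y2))^2) 0 := by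
  have hs : 0 < r^2 - (x^2 + y2) := by linarith
  have hs' : r^2 - ((x+0)^2 + y2) ≠ 0 := by simp; nlinarith
  have hnum : HasDerivAt (fun t : ℝ => 4*(x+t)) 4 0 := by
    simpa using ((hasDerivAt_id (0:ℝ)).const_add x).const_mul 4
  have hden : HasDerivAt (fun t : ℝ => r^2 - ((x+t)^2 + y2)) (-(2*(x+0))) 0 := by
    have h1 : HasDerivAt (fun t : ℝ => (x+t)^2 + y2) (2*(x+0)) 0 := by
      have := (((hasDerivAt_id (0:ℝ)).const_add x).pow 2).add_const y2
      refine this.congr_deriv ?_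
      simp [id]
    simpa using (h1.const_sub (r^2))
  have := hnum.div hden hs'
  refine this.congr_deriv ?_
  field_simp
  ring

lemma secondDeriv_nonpos_of_isLocalMax {f f' : ℝ → ℝ} {c : ℝ}
    (hf : ∀ᶠ t in nhds (0:ℝ), HasDerivAt f (f' t) t)
    (hf' : HasDerivAt f' c 0) (hmax : IsLocalMax f 0) : c ≤ 0 := by
  by_contra hc
  push_neg at hc
  have hf'0 : f' 0 = 0 := hmax.hasDerivAt_eq_zero hf.self_of_nhds
  have hslope : Tendsto (slope f' 0) (nhdsWithin 0 {(0:ℝ)}ᶜ) (nhds c) :=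
    hasDerivAt_iff_tendsto_slope.mp hf'
  have hev : ∀ᶠ t in nhdsWithin 0 {(0:ℝ)}ᶜ, 0 < slope f' 0 t :=
    hslope.eventually (eventually_gt_nhds hc)
  rw [eventually_nhdsWithin_iff, Metric.eventually_nhds_iff] at hev
  obtain ⟨δ₁, hδ₁, h1⟩ := hev
  rw [Metric.eventually_nhds_iff] at hf
  obtain ⟨δ₂, hδ₂, h2⟩ := hf
  have hmax' := hmax
  rw [IsLocalMax, IsMaxFilter, Metric.eventually_nhds_iff] at hmax'
  obtain ⟨δ₃, hδ₃, h3⟩ := hmax'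
  set δ := min δ₁ (min δ₂ δ₃) with hδdef
  have hδ : 0 < δ := lt_min hδ₁ (lt_min hδ₂ hδ₃)
  have hlt : δ / 2 < δ := by linarith
  have hcont : ContinuousOn f (Set.Icc 0 (δ/2)) := by
    intro t ht
    have : dist t 0 < δ₂ := by
      simp only [Real.dist_eq, sub_zero]
      rw [abs_of_nonneg ht.1]
      calc t ≤ δ/2 := ht.2
        _ < δ := hlt
        _ ≤ δ₂ := le_trans (min_le_right _ _) (min_le_left _ _)
    exact ((h2 this).differentiableAt.continuousAt).continuousWithinAt
  have hderiv : ∀ x ∈ Set.Ioo (0:ℝ) (δ/2), HasDerivAt f (f' x) x := by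
    intro x hx
    apply h2
    simp only [Real.dist_eq, sub_zero]
    rw [abs_of_nonneg hx.1.le]
    calc x < δ/2 := hx.2
      _ < δ := hlt
      _ ≤ δ₂ := le_trans (min_le_right _ _) (min_le_left _ _)
  obtain ⟨ξ, hξ, hξeq⟩ := exists_hasDerivAt_eq_slope f f' (by linarith : (0:ℝ) < δ/2) hcont hderiv
  have hξpos : 0 < f' ξ := by
    have hd : dist ξ 0 < δ₁ := by
      simp only [Real.dist_eq, sub_zero]
      rw [abs_of_nonneg hξ.1.le]
      calc ξ < δ/2 := hξ.2
        _ < δ := hlt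
        _ ≤ δ₁ := min_le_left _ _
    have := h1 hd (by simp [ne_of_gt hξ.1])
    rw [slope_def_field, hf'0] at this
    have h4 : 0 < f' ξ / ξ := by simpa using this
    exact (div_pos_iff.mp h4).resolve_right (fun h => absurd hξ.1 (not_lt.mpr h.2.le)) |>.1
  have hsl : f' ξ = (f (δ/2) - f 0) / (δ/2 - 0) := hξeq
  have hle : f (δ/2) ≤ f 0 := by
    apply h3
    simp only [Real.dist_eq, sub_zero]
    rw [abs_of_nonneg (by linarith : (0:ℝ) ≤ δ/2)]
    calc δ/2 < δ := hlt
      _ ≤ δ₃ := le_trans (min_le_right _ _) (min_le_right _ _)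
  rw [hsl] at hξpos
  have : 0 < f (δ/2) - f 0 := by
    have hpos : 0 < δ/2 - 0 := by linarith
    exact (div_pos_iff.mp hξpos).resolve_right (fun h => absurd hpos (not_lt.mpr h.2.le)) |>.1
  linarith

lemma key_dir (z₀ : ℂ) (r : ℝ) (ω : ℂ → ℝ)
    (hd : ∀ z ∈ Metric.ball z₀ r, ContDiffAt ℝ 2 ω z)
    (p : ℂ) (hpball : p ∈ Metric.ball z₀ r)
    (K : ℝ)
    (hploc : IsLocalMax
      (fun w => ω w - (K + (-2) * Real.log (r^2 - Complex.normSq (w - z₀)))) p)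
    (v : ℂ) (X : ℂ → ℝ)
    (hX : ∀ (w : ℂ) (t : ℝ), X (w + t • v) = X w + t)
    (hq : ∀ (w : ℂ) (t : ℝ),
      Complex.normSq (w + t • v - z₀) = (X w + t)^2 + (Complex.normSq (w - z₀) - (X w)^2)) :
    lineDeriv ℝ (fun w => lineDeriv ℝ ω w v) p v ≤
      (4*(r^2 - Complex.normSq (p - z₀)) + 8*(X p)^2)/(r^2 - Complex.normSq (p - z₀))^2 := by
  have hr : 0 < r := lt_of_le_of_lt dist_nonneg (mem_ball.mp hpball)
  have hball : ∀ w : ℂ, w ∈ Metric.ball z₀ r ↔ Complex.normSq (w - z₀) < r^2 := by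
    intro w
    rw [mem_ball, Complex.dist_eq, ← Complex.sq_norm]
    constructor
    · intro h; nlinarith [norm_nonneg (w - z₀)]
    · intro h; nlinarith [norm_nonneg (w - z₀)]
  set g : ℂ → ℝ := fun w => K + (-2) * Real.log (r^2 - Complex.normSq (w - z₀)) with hgdef
  set φ : ℂ → ℝ := fun w => ω w - g w with hφdef
  set x : ℝ := X p with hxdef
  set y2 : ℝ := Complex.normSq (p - z₀) - x^2 with hy2def
  have hqp : Complex.normSq (p - z₀) < r^2 := (hball p).mp hpball
  have hx2 : x^2 + y2 < r^2 := by rw [hy2def]; ring_nf; linarith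
  -- path membership
  have hmem : ∀ᶠ t : ℝ in nhds 0, p + t • v ∈ Metric.ball z₀ r := by
    have hcont : Continuous (fun t : ℝ => p + t • v) := by fun_prop
    have h0 : p + (0:ℝ) • v = p := by simp
    have h2 := (hcont.continuousAt (x := (0:ℝ))).preimage_mem_nhds
      (by rw [h0]; exact Metric.isOpen_ball.mem_nhds hpball)
    exact eventually_of_mem h2 (fun t ht => ht)
  -- formula for lineDeriv g along direction
  have gline : ∀ w : ℂ, Complex.normSq (w - z₀) < r^2 →
      lineDeriv ℝ g w v = 4 * X w / (r^2 - Complex.normSq (w - z₀)) := by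
    intro w hw
    rw [lineDeriv_eq_deriv']
    have hfun : (fun t : ℝ => g (w + t • v)) =
        fun t => K + (-2) * Real.log (r^2 - ((X w + t)^2 + (Complex.normSq (w - z₀) - (X w)^2))) := by
      funext t; simp only [hgdef]; rw [hq]
    rw [hfun]
    have h0 : (X w + 0)^2 + (Complex.normSq (w - z₀) - (X w)^2) < r^2 := by ring_nf; linarith
    rw [(helper1 K (X w) (Complex.normSq (w - z₀) - (X w)^2) r 0 h0).deriv]
    ring_nf
  -- differentiability of ω along path, any base in ball
  have hωdiffB : ∀ w : ℂ, w ∈ Metric.ball z₀ r →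
      ∀ t : ℝ, w + t • v ∈ Metric.ball z₀ r →
      DifferentiableAt ℝ (fun u : ℝ => ω (w + u • v)) t := by
    intro w hw t ht
    have h1 : DifferentiableAt ℝ ω (w + t • v) := (hd _ ht).differentiableAt two_ne_zero
    have h2 : DifferentiableAt ℝ (fun u : ℝ => w + u • v) t :=
      (((hasDerivAt_id t).smul_const v).const_add w).differentiableAt
    exact h1.comp t h2
  -- differentiability of t ↦ lineDeriv ω (p+t•v) v at 0
  have hfd : DifferentiableAt ℝ (fun t : ℝ => lineDeriv ℝ ω (p + t • v) v) 0 := by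
    have hfd1 : DifferentiableAt ℝ (fderiv ℝ ω) p := by
      have := (hd p hpball).fderiv_right (m := 1) (by norm_num)
      exact this.differentiableAt one_ne_zero
    have h2 : DifferentiableAt ℝ (fun t : ℝ => p + t • v) 0 :=
      (((hasDerivAt_id (0:ℝ)).smul_const v).const_add p).differentiableAt
    have h3 : DifferentiableAt ℝ (fun t : ℝ => fderiv ℝ ω (p + t • v)) 0 := by
      have h0 : p + (0:ℝ) • v = p := by simp
      exact DifferentiableAt.comp 0 (by rw [h0] at *; exact hfd1) h2
    have h4 : DifferentiableAt ℝ (fun t : ℝ => (fderiv ℝ ω (p + t • v)) v) 0 :=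
      h3.clm_apply (differentiableAt_const v)
    apply h4.congr_of_eventuallyEq
    filter_upwards [hmem] with t ht
    exact ((hd _ ht).differentiableAt two_ne_zero).lineDeriv_eq_fderiv
  set F : ℝ → ℝ := fun t => φ (p + t • v) with hFdef
  set F' : ℝ → ℝ := fun t => lineDeriv ℝ φ (p + t • v) v with hF'def
  -- split formula for F'
  have φline : ∀ t : ℝ, p + t • v ∈ Metric.ball z₀ r →
      F' t = lineDeriv ℝ ω (p + t • v) v - 4 * (x + t) / (r^2 - ((x + t)^2 + y2)) := by
    intro t ht
    have hqt : Complex.normSq (p + t • v - z₀) < r^2 := (hball _).mp ht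
    have hqt' : Complex.normSq (p + t • v - z₀) = (x + t)^2 + y2 := by
      rw [hq, hy2def, hxdef]
    have hXt : X (p + t • v) = x + t := hX p t
    have hsplit : lineDeriv ℝ φ (p + t • v) v =
        lineDeriv ℝ ω (p + t • v) v - lineDeriv ℝ g (p + t • v) v := by
      rw [lineDeriv_eq_deriv', lineDeriv_eq_deriv', lineDeriv_eq_deriv']
      have hω0 : DifferentiableAt ℝ (fun u : ℝ => ω (p + t • v + u • v)) 0 := by
        have := hωdiffB (p + t • v) ht 0 (by simpa using ht)
        simpa using this
      have hg0 : DifferentiableAt ℝ (fun u : ℝ => g (p + t • v + u • v)) 0 := by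
        have hfun : (fun u : ℝ => g (p + t • v + u • v)) =
            fun u => K + (-2) * Real.log (r^2 - (((x + t) + u)^2 +
              (Complex.normSq (p + t • v - z₀) - (x + t)^2))) := by
          funext u; simp only [hgdef]; rw [hq, hXt]
        rw [hfun]
        refine (helper1 K (x + t) _ r 0 ?_).differentiableAt
        ring_nf
        ring_nf at hqt
        linarith
      exact deriv_sub hω0 hg0
    rw [hF'def]
    simp only []
    rw [hsplit, gline _ hqt, hXt, hqt']
  -- eventual HasDerivAt for F
  have hFdiff : ∀ᶠ t in nhds (0:ℝ), HasDerivAt F (F' t) t := by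
    filter_upwards [hmem] with t ht
    have hωt : DifferentiableAt ℝ (fun u : ℝ => ω (p + u • v)) t := hωdiffB p hpball t ht
    have hgt : DifferentiableAt ℝ (fun u : ℝ => g (p + u • v)) t := by
      have hfun : (fun u : ℝ => g (p + u • v)) =
          fun u => K + (-2) * Real.log (r^2 - ((x + u)^2 + y2)) := by
        funext u; simp only [hgdef]; rw [hq, hy2def, hxdef]
      rw [hfun]
      refine (helper1 K x y2 r t ?_).differentiableAt
      have hqt : Complex.normSq (p + t • v - z₀) < r^2 := (hball _).mp ht
      rw [hq] at hqt
      rw [hy2def, hxdef]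
      exact hqt
    have hFd : DifferentiableAt ℝ F t := hωt.sub hgt
    have hderiv : deriv F t = F' t := by
      rw [hF'def]
      simp only []
      rw [lineDeriv_eq_deriv']
      have hfun : (fun s : ℝ => φ (p + t • v + s • v)) = fun s => F (t + s) := by
        funext s
        simp only [hFdef, add_smul, add_assoc]
      rw [hfun, deriv_comp_const_add]
      norm_num
    rw [← hderiv]
    exact hFd.hasDerivAt
  -- local max of F at 0
  have hF0 : IsLocalMax F 0 := by
    have h0 : p + (0:ℝ) • v = p := by simp
    have hcont2 : Continuous (fun t : ℝ => p + t • v) := by fun_prop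
    have htend : Filter.Tendsto (fun t : ℝ => p + t • v) (nhds 0) (nhds p) := by
      simpa using hcont2.tendsto (0:ℝ)
    have hev := htend.eventually hploc
    have hF0eq : F 0 = φ p := by rw [hFdef]; simp
    unfold IsLocalMax IsMaxFilter
    rw [hF0eq]
    exact hev
  -- Ψ derivative
  have hΨ := helper2 x y2 r hx2
  -- F' differentiable at 0
  have hF'ev : F' =ᶠ[nhds (0:ℝ)]
      fun t => lineDeriv ℝ ω (p + t • v) v - 4*(x+t)/(r^2 - ((x+t)^2+y2)) := by
    filter_upwards [hmem] with t ht
    exact φline t ht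
  have hF'diff : DifferentiableAt ℝ F' 0 :=
    (hfd.sub hΨ.differentiableAt).congr_of_eventuallyEq hF'ev
  have hkeyA : deriv F' 0 ≤ 0 :=
    secondDeriv_nonpos_of_isLocalMax hFdiff hF'diff.hasDerivAt hF0
  -- conclude
  rw [lineDeriv_eq_deriv']
  have hev2 : (fun t : ℝ => lineDeriv ℝ ω (p + t • v) v) =ᶠ[nhds (0:ℝ)]
      fun t => F' t + 4*(x+t)/(r^2-((x+t)^2+y2)) := by
    filter_upwards [hmem] with t ht
    rw [φline t ht]; ring
  have hgoal : deriv (fun t : ℝ => lineDeriv ℝ ω (p + t • v) v) 0 =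
      deriv F' 0 + (4*(r^2-(x^2+y2)) + 8*x^2)/(r^2-(x^2+y2))^2 := by
    rw [hev2.deriv_eq, deriv_fun_add hF'diff hΨ.differentiableAt, hΨ.deriv]
  have hsx : r^2 - (x^2+y2) = r^2 - Complex.normSq (p - z₀) := by rw [hy2def]; ring
  rw [hsx] at hgoal
  rw [hgoal, hxdef]
  have hs : 0 < r^2 - Complex.normSq (p - z₀) := by linarith
  have : (0:ℝ) < (r^2 - Complex.normSq (p - z₀))^2 := by positivity
  linarith [hkeyA]

lemma liouville_disk_bound (z₀ : ℂ) (r : ℝ) (hr : 0 < r) (ω : ℂ → ℝ)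
    (hc : ContinuousOn ω (Metric.closedBall z₀ r))
    (hd : ∀ z ∈ Metric.ball z₀ r, ContDiffAt ℝ 2 ω z)
    (hpde : ∀ z ∈ Metric.ball z₀ r, lap ω z = 2 * Real.exp (ω z)) :
    ω z₀ ≤ Real.log 4 - 2 * Real.log r := by
  have hball : ∀ w : ℂ, w ∈ Metric.ball z₀ r ↔ Complex.normSq (w - z₀) < r^2 := by
    intro w
    rw [Metric.mem_ball, Complex.dist_eq, ← Complex.sq_norm]
    constructor
    · intro h; nlinarith [norm_nonneg (w - z₀)]
    · intro h; nlinarith [norm_nonneg (w - z₀)]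
  have hcball : ∀ w : ℂ, Complex.normSq (w - z₀) ≤ r^2 → w ∈ Metric.closedBall z₀ r := by
    intro w h
    rw [Metric.mem_closedBall, Complex.dist_eq]
    nlinarith [norm_nonneg (w - z₀), Complex.sq_norm (w - z₀)]
  obtain ⟨Mp, _, hMp⟩ := (isCompact_closedBall z₀ r).exists_isMaxOn
      (Metric.nonempty_closedBall.mpr hr.le) hc
  set M := ω Mp with hMdef
  have hM : ∀ w ∈ Metric.closedBall z₀ r, ω w ≤ M := hMp
  set K := Real.log (4*r^2) with hKdef
  set g : ℂ → ℝ := fun w => K + (-2) * Real.log (r^2 - Complex.normSq (w - z₀)) with hgdef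
  set ε := min (Real.exp ((K - M)/2)) (r^2/2) with hεdef
  have hε : 0 < ε := lt_min (Real.exp_pos _) (by positivity)
  have hεr : ε ≤ r^2/2 := min_le_right _ _
  have hgM : ∀ w : ℂ, r^2 - ε ≤ Complex.normSq (w - z₀) → Complex.normSq (w - z₀) < r^2 →
      M ≤ g w := by
    intro w h1 h2
    have hs : 0 < r^2 - Complex.normSq (w - z₀) := by linarith
    have hle : r^2 - Complex.normSq (w - z₀) ≤ Real.exp ((K-M)/2) := by
      have := min_le_left (Real.exp ((K - M)/2)) (r^2/2)
      linarith
    have hlog : Real.log (r^2 - Complex.normSq (w - z₀)) ≤ (K - M)/2 := by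
      calc Real.log (r^2 - Complex.normSq (w - z₀))
          ≤ Real.log (Real.exp ((K-M)/2)) := Real.log_le_log hs hle
        _ = (K-M)/2 := Real.log_exp _
    simp only [hgdef]
    nlinarith
  set S := {w : ℂ | Complex.normSq (w - z₀) ≤ r^2 - ε} with hSdef
  have hqc : Continuous (fun w : ℂ => Complex.normSq (w - z₀)) :=
    Complex.continuous_normSq.comp (continuous_id.sub continuous_const)
  have hSball : ∀ w : ℂ, w ∈ S → w ∈ Metric.ball z₀ r := by
    intro w hw
    rw [hball]
    have : Complex.normSq (w - z₀) ≤ r^2 - ε := hw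
    linarith
  have hSclosed : IsClosed S := isClosed_le hqc continuous_const
  have hSbdd : Bornology.IsBounded S := by
    apply (Metric.isBounded_closedBall (x := z₀) (r := r)).subset
    intro w hw
    exact hcball w (by have : Complex.normSq (w - z₀) ≤ r^2 - ε := hw; linarith)
  have hScomp : IsCompact S := Metric.isCompact_of_isClosed_isBounded hSclosed hSbdd
  have hz₀S : z₀ ∈ S := by
    have : Complex.normSq (z₀ - z₀) = 0 := by simp
    simp only [hSdef, Set.mem_setOf_eq, this]
    nlinarith
  set φ : ℂ → ℝ := fun w => ω w - g w with hφdef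
  have hgcont : ∀ w : ℂ, Complex.normSq (w - z₀) < r^2 → ContinuousAt g w := by
    intro w hw
    have hs : 0 < r^2 - Complex.normSq (w - z₀) := by linarith
    have h1 : ContinuousAt (fun z : ℂ => r^2 - Complex.normSq (z - z₀)) w :=
      (continuous_const.sub hqc).continuousAt
    exact continuousAt_const.add (continuousAt_const.mul (h1.log hs.ne'))
  have hφcont : ContinuousOn φ S := by
    intro w hw
    exact (((hd w (hSball w hw)).continuousAt).sub
      (hgcont w ((hball w).mp (hSball w hw)))).continuousWithinAt
  obtain ⟨p, hpS, hpmax⟩ := hScomp.exists_isMaxOn ⟨z₀, hz₀S⟩ hφcont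
  have hgz₀ : g z₀ = Real.log 4 - 2 * Real.log r := by
    have h0 : Complex.normSq (z₀ - z₀) = 0 := by simp
    simp only [hgdef, h0, sub_zero, hKdef]
    rw [Real.log_mul (by norm_num) (by positivity), sq, Real.log_mul hr.ne' hr.ne']
    ring
  suffices hφp : φ p ≤ 0 by
    have h1 : φ z₀ ≤ φ p := hpmax hz₀S
    have h2 : ω z₀ - g z₀ ≤ 0 := le_trans h1 hφp
    rw [hgz₀] at h2
    linarith
  by_contra hφp
  push_neg at hφp
  have hpball : p ∈ Metric.ball z₀ r := hSball p hpS
  have hploc : IsLocalMax φ p := by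
    apply Filter.eventually_of_mem (Metric.isOpen_ball.mem_nhds hpball)
    intro w hw
    by_cases hwS : w ∈ S
    · exact hpmax hwS
    · have h2 : ω w ≤ M := hM w (Metric.ball_subset_closedBall hw)
      have h1 : r^2 - ε < Complex.normSq (w - z₀) := by
        simp only [hSdef, Set.mem_setOf_eq, not_le] at hwS
        linarith
      have h3 : M ≤ g w := hgM w h1.le ((hball w).mp hw)
      have h4 : φ w ≤ 0 := by simp only [hφdef]; linarith
      linarith
  have hqp : Complex.normSq (p - z₀) < r^2 := (hball p).mp hpball
  set s := r^2 - Complex.normSq (p - z₀) with hsdef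
  have hs : 0 < s := by rw [hsdef]; linarith
  -- apply key_dir in both directions
  have k1 := key_dir z₀ r ω hd p hpball K hploc 1 (fun w => (w - z₀).re)
    (by intro w t; simp [Complex.add_re, Complex.sub_re, Complex.smul_re]; ring)
    (by intro w t
        simp [Complex.normSq_apply, Complex.add_re, Complex.add_im, Complex.sub_re,
          Complex.sub_im, Complex.smul_re, Complex.smul_im]
        ring)
  have k2 := key_dir z₀ r ω hd p hpball K hploc Complex.I (fun w => (w - z₀).im)
    (by intro w t; simp [Complex.add_im, Complex.sub_im, Complex.smul_im, Complex.I_im]; ring)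
    (by intro w t
        simp [Complex.normSq_apply, Complex.add_re, Complex.add_im, Complex.sub_re,
          Complex.sub_im, Complex.smul_re, Complex.smul_im, Complex.I_re, Complex.I_im]
        ring)
  have hlap := hpde p hpball
  have hab : ((p - z₀).re)^2 + ((p - z₀).im)^2 = Complex.normSq (p - z₀) := by
    simp [Complex.normSq_apply]; ring
  have hlaple : lap ω p ≤ 8*r^2/s^2 := by
    have := add_le_add k1 k2
    rw [lap] at *
    calc lineDeriv ℝ (fun w => lineDeriv ℝ ω w 1) p 1 +
        lineDeriv ℝ (fun w => lineDeriv ℝ ω w Complex.I) p Complex.I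
        ≤ (4*(r^2 - Complex.normSq (p - z₀)) + 8*((p - z₀).re)^2)/(r^2 - Complex.normSq (p - z₀))^2
          + (4*(r^2 - Complex.normSq (p - z₀)) + 8*((p - z₀).im)^2)/(r^2 - Complex.normSq (p - z₀))^2 := this
      _ = 8*r^2/s^2 := by
          rw [← add_div, hsdef]
          congr 1
          nlinarith [hab]
  have hωgp : g p < ω p := by
    have : 0 < ω p - g p := hφp
    linarith
  have hegp : Real.exp (g p) = 4*r^2/s^2 := by
    simp only [hgdef]
    rw [show K + (-2) * Real.log (r^2 - Complex.normSq (p - z₀)) =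
      K - (Real.log s + Real.log s) by rw [hsdef]; ring]
    rw [Real.exp_sub, Real.exp_add, Real.exp_log hs, hKdef, Real.exp_log (by positivity)]
    ring
  have h5 := Real.exp_lt_exp.mpr hωgp
  rw [hegp] at h5
  rw [hlap] at hlaple
  have h6 : (8:ℝ)*r^2/s^2 = 2*(4*r^2/s^2) := by ring
  linarith

/-- Uniform interior upper bound for solutions of the Liouville equation on annuli:
given `0 < ρ₁ ≤ ρ₂ < 1` there are `C` and `L₀ > 0` such that every solution `ω` of
`Δω = 2e^ω` on `A_L` with `L ≥ L₀`, continuous up to the closed annulus, satisfies `ω ≤ C` on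
`{ρ₁ ≤ |z| ≤ ρ₂}`; the bound is independent of `L` and of the solution. -/
theorem liouville_uniform_interior_bound (ρ₁ ρ₂ : ℝ)
    (h₁ : 0 < ρ₁) (h₁₂ : ρ₁ ≤ ρ₂) (h₂ : ρ₂ < 1) :
    ∃ C L₀ : ℝ, 0 < L₀ ∧
      ∀ L : ℝ, L₀ ≤ L → ∀ ω : ℂ → ℝ,
        ContinuousOn ω {z : ℂ | Real.exp (-L) ≤ ‖z‖ ∧ ‖z‖ ≤ 1} →
        ContDiffOn ℝ 2 ω (annulusSet L) →
        (∀ z ∈ annulusSet L, lap ω z = 2 * Real.exp (ω z)) →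
        ∀ z : ℂ, ρ₁ ≤ ‖z‖ → ‖z‖ ≤ ρ₂ → ω z ≤ C := by
  set r : ℝ := min ρ₁ (1 - ρ₂) / 2 with hrdef
  have hr : 0 < r := by
    rw [hrdef]
    have : 0 < min ρ₁ (1 - ρ₂) := lt_min h₁ (by linarith)
    linarith
  have hrρ₁ : r ≤ ρ₁/2 := by
    rw [hrdef]
    have := min_le_left ρ₁ (1 - ρ₂)
    linarith
  have hrρ₂ : r ≤ (1 - ρ₂)/2 := by
    rw [hrdef]
    have := min_le_right ρ₁ (1 - ρ₂)
    linarith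
  set u : ℝ := (ρ₁ - r)/2 with hudef
  have hu0 : 0 < u := by rw [hudef]; linarith
  have hu1 : u < 1 := by rw [hudef]; linarith
  refine ⟨Real.log 4 - 2 * Real.log r, -Real.log u, ?_, ?_⟩
  · have := Real.log_neg hu0 hu1
    linarith
  intro L hL ω hc hd2 hpde z hz₁ hz₂
  have hexpL : Real.exp (-L) ≤ u := by
    calc Real.exp (-L) ≤ Real.exp (-(-Real.log u)) := Real.exp_le_exp.mpr (by linarith)
      _ = u := by rw [neg_neg, Real.exp_log hu0]
  have hopen : IsOpen (annulusSet L) := by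
    have h1 : IsOpen {w : ℂ | Real.exp (-L) < ‖w‖} :=
      isOpen_lt continuous_const continuous_norm
    have h2 : IsOpen {w : ℂ | ‖w‖ < 1} :=
      isOpen_lt continuous_norm continuous_const
    exact (h1.inter h2 : IsOpen ({w : ℂ | Real.exp (-L) < ‖w‖} ∩ _))
  have hsub : Metric.closedBall z r ⊆ annulusSet L := by
    intro w hw
    have hdist : ‖z - w‖ ≤ r := by
      rw [Metric.mem_closedBall, Complex.dist_eq] at hw
      rw [show z - w = -(w - z) by ring, norm_neg]
      exact hw
    have hlow : ‖z‖ - ‖w‖ ≤ ‖z - w‖ := by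
      simpa using norm_sub_norm_le z w
    have hup : ‖w‖ ≤ ‖z‖ + ‖w - z‖ := by
      simpa using norm_le_norm_add_norm_sub' w z
    have hwz : ‖w - z‖ ≤ r := by
      rw [show w - z = -(z - w) by ring, norm_neg]; exact hdist
    constructor
    · have : ρ₁ - r ≤ ‖w‖ := by linarith
      have : u < ρ₁ - r := by rw [hudef]; linarith
      linarith
    · have : ‖w‖ ≤ ρ₂ + r := by linarith
      linarith
  have hsubc : Metric.closedBall z r ⊆
      {w : ℂ | Real.exp (-L) ≤ ‖w‖ ∧ ‖w‖ ≤ 1} := by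
    intro w hw
    obtain ⟨ha, hb⟩ := hsub hw
    exact ⟨ha.le, hb.le⟩
  have hballsub : Metric.ball z r ⊆ annulusSet L :=
    le_trans Metric.ball_subset_closedBall hsub
  exact liouville_disk_bound z r hr ω (hc.mono hsubc)
    (fun w hw => hd2.contDiffAt (hopen.mem_nhds (hballsub hw)))
    (fun w hw => hpde w (hballsub hw))
end

section
/- Let I ⊆ ℝ be a nonempty open interval, f : I → ℝ twice continuously differentiable with f > 0 on I, and let F : I → ℝ satisfy F' = f^{−3/2} on I. Then: (i) for all constants c̃, ĉ ∈ ℝ the function β := c̃ √f − ĉ √f · F is twice continuously differentiable and satisfies f'β' − β f'' + 2 f β'' = 0 on I; (ii) conversely, every twice continuously differentiable β : I → ℝ satisfying f'β' − β f'' + 2 f β'' = 0 on I is of the form β = c̃ √f − ĉ √f · F for some constants c̃, ĉ ∈ ℝ. -/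
/-- A function with zero derivative on an open preconnected subset of `ℝ` is constant there. -/
lemma constOfDerivZero {I : Set ℝ} (hO : IsOpen I) (hC : IsPreconnected I)
    {W : ℝ → ℝ} (h : ∀ r ∈ I, HasDerivAt W 0 r) :
    ∀ x ∈ I, ∀ y ∈ I, W x = W y := by
  have hconv : Convex ℝ I := convex_iff_ordConnected.mpr hC.ordConnected
  intro x hx y hy
  refine hconv.is_const_of_fderivWithin_eq_zero
    (fun r hr => (h r hr).differentiableAt.differentiableWithinAt) (fun r hr => ?_) hx hy
  rw [fderivWithin_of_isOpen hO hr, (h r hr).hasFDerivAt.fderiv]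
  ext; simp

/-- The radial equation `f'β' − βf'' + 2fβ'' = 0` satisfied by static potentials of
Birmingham–Kottler-type metrics `f(r)⁻¹dr² + r²h`: its general solution on an interval where
`f > 0` is `β = c̃ √f − ĉ √f · F`, where `F` is a primitive of `f^{-3/2}`. -/
theorem radial_static_potential_equation
    (I : Set ℝ) (hIopen : IsOpen I) (hIconn : IsPreconnected I) (hIne : I.Nonempty)
    (f F : ℝ → ℝ) (hf : ContDiffOn ℝ 2 f I) (hfpos : ∀ r ∈ I, 0 < f r)
    (hF : ∀ r ∈ I, HasDerivAt F (f r ^ (-(3:ℝ)/2)) r) :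
    (∀ ct ch : ℝ,
      ContDiffOn ℝ 2 (fun r => ct * Real.sqrt (f r) - ch * Real.sqrt (f r) * F r) I ∧
      ∀ r ∈ I,
        deriv f r * deriv (fun s => ct * Real.sqrt (f s) - ch * Real.sqrt (f s) * F s) r
          - (ct * Real.sqrt (f r) - ch * Real.sqrt (f r) * F r) * deriv (deriv f) r
          + 2 * f r *
            deriv (deriv (fun s => ct * Real.sqrt (f s) - ch * Real.sqrt (f s) * F s)) r = 0) ∧
    (∀ β : ℝ → ℝ, ContDiffOn ℝ 2 β I →
      (∀ r ∈ I,
        deriv f r * deriv β r - β r * deriv (deriv f) r + 2 * f r * deriv (deriv β) r = 0) →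
      ∃ ct ch : ℝ, ∀ r ∈ I, β r = ct * Real.sqrt (f r) - ch * Real.sqrt (f r) * F r) := by
  -- Basic differentiability facts for `f`, `√f`, `F`
  have hfd : ∀ r ∈ I, HasDerivAt f (deriv f r) r := fun r hr =>
    ((hf.differentiableOn (by norm_num)).differentiableAt (hIopen.mem_nhds hr)).hasDerivAt
  have hf1 : ContDiffOn ℝ 1 (deriv f) I := hf.deriv_of_isOpen hIopen (by norm_num)
  have hf'd : ∀ r ∈ I, HasDerivAt (deriv f) (deriv (deriv f) r) r := fun r hr =>
    ((hf1.differentiableOn (by norm_num)).differentiableAt (hIopen.mem_nhds hr)).hasDerivAt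
  have hgpos : ∀ r ∈ I, 0 < Real.sqrt (f r) := fun r hr => Real.sqrt_pos.mpr (hfpos r hr)
  have hgd : ∀ r ∈ I,
      HasDerivAt (fun s => Real.sqrt (f s)) (deriv f r / (2 * Real.sqrt (f r))) r := by
    intro r hr
    have h := (Real.hasDerivAt_sqrt (ne_of_gt (hfpos r hr))).comp r (hfd r hr)
    exact h.congr_deriv (by ring)
  have hfC2at : ∀ r ∈ I, ContDiffAt ℝ 2 f r := fun r hr => hf.contDiffAt (hIopen.mem_nhds hr)
  have hgC2 : ContDiffOn ℝ 2 (fun s => Real.sqrt (f s)) I := fun r hr =>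
    ((Real.contDiffAt_sqrt (n := 2) (ne_of_gt (hfpos r hr))).comp r (hfC2at r hr)).contDiffWithinAt
  have hrpowC1 : ContDiffOn ℝ 1 (fun r => f r ^ (-(3:ℝ)/2)) I := fun r hr =>
    ((Real.contDiffAt_rpow_const_of_ne (ne_of_gt (hfpos r hr))).comp r
      ((hfC2at r hr).of_le (by norm_num))).contDiffWithinAt
  have hFC2 : ContDiffOn ℝ 2 F I := by
    rw [show (2 : WithTop ℕ∞) = 1 + 1 by norm_num, contDiffOn_succ_iff_deriv_of_isOpen hIopen]
    refine ⟨fun r hr => ((hF r hr).differentiableAt).differentiableWithinAt, by simp, ?_⟩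
    exact hrpowC1.congr fun r hr => (hF r hr).deriv
  have hcube : ∀ r ∈ I, Real.sqrt (f r) ^ 3 * f r ^ (-(3:ℝ)/2) = 1 := by
    intro r hr
    have hp := hfpos r hr
    rw [Real.sqrt_eq_rpow, ← Real.rpow_natCast (f r ^ (1/(2:ℝ))) 3, ← Real.rpow_mul hp.le,
        ← Real.rpow_add hp]
    norm_num
  constructor
  · -- Part (i): each `β = ct √f − ch √f F` is C² and solves the equation
    intro ct ch
    set β : ℝ → ℝ := fun s => ct * Real.sqrt (f s) - ch * Real.sqrt (f s) * F s with hβdef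
    have hβC2 : ContDiffOn ℝ 2 β I :=
      (contDiffOn_const.mul hgC2).sub ((contDiffOn_const.mul hgC2).mul hFC2)
    have hβd : ∀ r ∈ I, HasDerivAt β
        (ct * (deriv f r / (2 * Real.sqrt (f r))) -
          ((ch * (deriv f r / (2 * Real.sqrt (f r)))) * F r +
            (ch * Real.sqrt (f r)) * f r ^ (-(3:ℝ)/2))) r := fun r hr =>
      ((hgd r hr).const_mul ct).sub (((hgd r hr).const_mul ch).mul (hF r hr))
    have hβ1 : ContDiffOn ℝ 1 (deriv β) I := hβC2.deriv_of_isOpen hIopen (by norm_num)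
    have hβ'd : ∀ r ∈ I, HasDerivAt (deriv β) (deriv (deriv β) r) r := fun r hr =>
      ((hβ1.differentiableOn (by norm_num)).differentiableAt (hIopen.mem_nhds hr)).hasDerivAt
    set W : ℝ → ℝ := fun s => 2 * f s * deriv β s - deriv f s * β s with hWdef
    -- the Wronskian-type quantity `W = 2fβ' − f'β` is the constant `−2ch`
    have hWconst : ∀ r ∈ I, W r = -(2 * ch) := by
      intro r hr
      have hd := (hβd r hr).deriv
      have hs2 : Real.sqrt (f r) ^ 2 = f r := Real.sq_sqrt (hfpos r hr).le
      have hs3 := hcube r hr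
      have hspos := hgpos r hr
      show 2 * f r * deriv β r - deriv f r * β r = -(2 * ch)
      rw [hd]
      simp only [hβdef]
      set s := Real.sqrt (f r) with hs
      set t := f r ^ (-(3:ℝ)/2) with ht
      rw [← hs2]
      have hsne : s ≠ 0 := ne_of_gt hspos
      field_simp
      ring_nf
      linear_combination (-2 * ch) * hs3
    refine ⟨hβC2, fun r hr => ?_⟩
    -- the equation is the derivative of `W`, which vanishes since `W` is constant
    have hW0 : HasDerivAt W 0 r := by
      have hev : W =ᶠ[nhds r] fun _ => -(2 * ch) :=
        Filter.eventuallyEq_of_mem (hIopen.mem_nhds hr) hWconst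
      exact (hasDerivAt_const r (-(2 * ch))).congr_of_eventuallyEq hev
    have hβdr : HasDerivAt β (deriv β r) r := by
      rw [(hβd r hr).deriv]; exact hβd r hr
    have hWd : HasDerivAt W
        (2 * deriv f r * deriv β r + 2 * f r * deriv (deriv β) r -
          (deriv (deriv f) r * β r + deriv f r * deriv β r)) r :=
      (((hfd r hr).const_mul 2).mul (hβ'd r hr)).sub ((hf'd r hr).mul hβdr)
    have h0 := hW0.unique hWd
    have hβr : ct * Real.sqrt (f r) - ch * Real.sqrt (f r) * F r = β r := rfl
    rw [hβr]
    linarith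
  · -- Part (ii): every solution has this form
    intro β hβC2 heq
    have hβd : ∀ r ∈ I, HasDerivAt β (deriv β r) r := fun r hr =>
      ((hβC2.differentiableOn (by norm_num)).differentiableAt (hIopen.mem_nhds hr)).hasDerivAt
    have hβ1 : ContDiffOn ℝ 1 (deriv β) I := hβC2.deriv_of_isOpen hIopen (by norm_num)
    have hβ'd : ∀ r ∈ I, HasDerivAt (deriv β) (deriv (deriv β) r) r := fun r hr =>
      ((hβ1.differentiableOn (by norm_num)).differentiableAt (hIopen.mem_nhds hr)).hasDerivAt
    set W : ℝ → ℝ := fun s => 2 * f s * deriv β s - deriv f s * β s with hWdef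
    have hWd0 : ∀ r ∈ I, HasDerivAt W 0 r := by
      intro r hr
      have h1 : HasDerivAt W
          (2 * deriv f r * deriv β r + 2 * f r * deriv (deriv β) r -
            (deriv (deriv f) r * β r + deriv f r * deriv β r)) r :=
        (((hfd r hr).const_mul 2).mul (hβ'd r hr)).sub ((hf'd r hr).mul (hβd r hr))
      convert h1 using 1
      linarith [heq r hr]
    obtain ⟨r₀, hr₀⟩ := hIne
    have hWc : ∀ r ∈ I, W r = W r₀ := fun r hr =>
      constOfDerivZero hIopen hIconn hWd0 r hr r₀ hr₀
    set ch : ℝ := -(W r₀) / 2 with hch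
    set u : ℝ → ℝ := fun s => β s / Real.sqrt (f s) + ch * F s with hu
    have hud0 : ∀ r ∈ I, HasDerivAt u 0 r := by
      intro r hr
      have hsne : Real.sqrt (f r) ≠ 0 := ne_of_gt (hgpos r hr)
      have h1 : HasDerivAt u
          ((deriv β r * Real.sqrt (f r) - β r * (deriv f r / (2 * Real.sqrt (f r)))) /
              Real.sqrt (f r) ^ 2 + ch * f r ^ (-(3:ℝ)/2)) r :=
        ((hβd r hr).div (hgd r hr) hsne).add ((hF r hr).const_mul ch)
      convert h1 using 1
      have hs2 : Real.sqrt (f r) ^ 2 = f r := Real.sq_sqrt (hfpos r hr).le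
      have hs3 := hcube r hr
      have hWr : 2 * f r * deriv β r - deriv f r * β r = W r₀ := hWc r hr
      set s := Real.sqrt (f r) with hs
      set t := f r ^ (-(3:ℝ)/2) with ht
      rw [hch]
      rw [← hs2] at hWr
      field_simp
      linear_combination W r₀ * hs3 - hWr
    have huc : ∀ r ∈ I, u r = u r₀ := fun r hr =>
      constOfDerivZero hIopen hIconn hud0 r hr r₀ hr₀
    refine ⟨u r₀, ch, fun r hr => ?_⟩
    have h1 : β r / Real.sqrt (f r) + ch * F r = u r₀ := huc r hr
    have hsne : Real.sqrt (f r) ≠ 0 := ne_of_gt (hgpos r hr)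
    field_simp at h1
    linarith [h1]
end

section
/- Let k ∈ ℝ with k ≠ 0, let I ⊆ {r > 0 : r² + k > 0} be a nonempty open interval, and set f(r) := r² + k. Then a twice continuously differentiable function β : I → ℝ satisfies f'β' − β f'' + 2 f β'' = 0 on I (equivalently 2r β' − 2β + 2(r²+k) β'' = 0) if and only if there are constants c̃, ĉ ∈ ℝ such that β(r) = −(ĉ/k) r + c̃ √(r² + k) for all r ∈ I. -/
/-!
The quantity `F = (r² + k) β' - r β` satisfies `2 F' = 2rβ' - 2β + 2(r² + k)β''`, so the solutions
are exactly the `β` along which `F` is constant. Moreover `(β / √(r² + k))' = F / (r² + k)^{3/2}`.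
Since `F = k` for `β = r`, a solution with `F ≡ C` makes `β - (C / k) r` have `F ≡ 0`, hence be a
constant multiple of `√(r² + k)`; conversely `F ≡ -ĉ` for `β = -(ĉ / k) r + c̃ √(r² + k)`.
-/

open Real Filter

def radialFirstIntegral (k : ℝ) (β β' : ℝ → ℝ) (r : ℝ) : ℝ :=
  (r ^ 2 + k) * β' r - r * β r

theorem IsOpen.exists_eq_of_hasDerivAt_zero {I : Set ℝ} (hI : IsOpen I)
    (hI' : IsPreconnected I) {F : ℝ → ℝ} (hF : ∀ x ∈ I, HasDerivAt F 0 x) :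
    ∃ a, ∀ x ∈ I, F x = a :=
  hI.exists_is_const_of_deriv_eq_zero hI'
    (fun x hx => (hF x hx).differentiableAt.differentiableWithinAt) (fun x hx => (hF x hx).deriv)

section

variable {k r : ℝ} {β β' : ℝ → ℝ}

theorem hasDerivAt_sqrt_sq_add (hr : 0 < r ^ 2 + k) :
    HasDerivAt (fun x => √(x ^ 2 + k)) (r / √(r ^ 2 + k)) r := by
  have hf : HasDerivAt (fun x : ℝ => x ^ 2 + k) (2 * r) r := by
    simpa using (hasDerivAt_pow 2 r).add_const k
  convert hf.sqrt hr.ne' using 1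
  field_simp

theorem hasDerivAt_radialFirstIntegral {b : ℝ} (h₁ : HasDerivAt β (β' r) r)
    (h₂ : HasDerivAt β' b r) :
    HasDerivAt (radialFirstIntegral k β β') (r * β' r - β r + (r ^ 2 + k) * b) r := by
  have hf : HasDerivAt (fun x : ℝ => x ^ 2 + k) (2 * r) r := by
    simpa using (hasDerivAt_pow 2 r).add_const k
  exact ((hf.mul h₂).sub ((hasDerivAt_id r).mul h₁)).congr_deriv (by simp only [id]; ring)

theorem hasDerivAt_div_sqrt_sq_add (hr : 0 < r ^ 2 + k) (h : HasDerivAt β (β' r) r) :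
    HasDerivAt (fun x => β x / √(x ^ 2 + k))
      (radialFirstIntegral k β β' r / ((r ^ 2 + k) * √(r ^ 2 + k))) r := by
  have hs : 0 < √(r ^ 2 + k) := sqrt_pos.mpr hr
  refine (h.div (hasDerivAt_sqrt_sq_add hr) hs.ne').congr_deriv ?_
  unfold radialFirstIntegral
  field_simp
  rw [sq_sqrt hr.le]

theorem radialFirstIntegral_sub_mul_id (a : ℝ) :
    radialFirstIntegral k (fun x => β x - a * x) (fun x => β' x - a) r =
      radialFirstIntegral k β β' r - a * k := by
  unfold radialFirstIntegral
  ring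

theorem radialFirstIntegral_linear_add_sqrt (hk : k ≠ 0) (hr : 0 < r ^ 2 + k) (ct ch : ℝ) :
    radialFirstIntegral k (fun x => -(ch / k) * x + ct * √(x ^ 2 + k))
      (fun x => -(ch / k) + ct * (x / √(x ^ 2 + k))) r = -ch := by
  have hs : 0 < √(r ^ 2 + k) := sqrt_pos.mpr hr
  unfold radialFirstIntegral
  field_simp
  linear_combination (-(k * ct * r)) * sq_sqrt hr.le

variable {I : Set ℝ} {β'' : ℝ → ℝ}

theorem exists_eq_of_radialODE (hk : k ≠ 0) (hIopen : IsOpen I) (hIconn : IsPreconnected I)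
    (hIpos : ∀ r ∈ I, 0 < r ^ 2 + k)
    (h₁ : ∀ r ∈ I, HasDerivAt β (β' r) r) (h₂ : ∀ r ∈ I, HasDerivAt β' (β'' r) r)
    (hode : ∀ r ∈ I, 2 * r * β' r - 2 * β r + 2 * (r ^ 2 + k) * β'' r = 0) :
    ∃ ct ch : ℝ, ∀ r ∈ I, β r = -(ch / k) * r + ct * √(r ^ 2 + k) := by
  obtain ⟨C, hF⟩ : ∃ C, ∀ r ∈ I, radialFirstIntegral k β β' r = C :=
    hIopen.exists_eq_of_hasDerivAt_zero hIconn fun r hr =>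
      (hasDerivAt_radialFirstIntegral (h₁ r hr) (h₂ r hr)).congr_deriv (by linarith [hode r hr])
  obtain ⟨ct, hct⟩ : ∃ ct, ∀ r ∈ I, (β r - C / k * r) / √(r ^ 2 + k) = ct := by
    refine hIopen.exists_eq_of_hasDerivAt_zero hIconn fun r hr => ?_
    have hβC : HasDerivAt (fun x => β x - C / k * x) (β' r - C / k) r :=
      ((h₁ r hr).sub ((hasDerivAt_id r).const_mul (C / k))).congr_deriv (by simp)
    refine (hasDerivAt_div_sqrt_sq_add (β' := fun x => β' x - C / k) (hIpos r hr) hβC)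
      |>.congr_deriv ?_
    rw [radialFirstIntegral_sub_mul_id, hF r hr, div_mul_cancel₀ C hk, sub_self, zero_div]
  refine ⟨ct, -C, fun r hr => ?_⟩
  have hs : √(r ^ 2 + k) ≠ 0 := (sqrt_pos.mpr (hIpos r hr)).ne'
  rw [← hct r hr]
  field_simp
  ring

theorem radialODE_of_eq (hk : k ≠ 0) (hIopen : IsOpen I) (hIpos : ∀ r ∈ I, 0 < r ^ 2 + k)
    (h₁ : ∀ r ∈ I, HasDerivAt β (β' r) r) (h₂ : ∀ r ∈ I, HasDerivAt β' (β'' r) r) (ct ch : ℝ)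
    (hβ : ∀ r ∈ I, β r = -(ch / k) * r + ct * √(r ^ 2 + k)) :
    ∀ r ∈ I, 2 * r * β' r - 2 * β r + 2 * (r ^ 2 + k) * β'' r = 0 := by
  have hβ' : ∀ r ∈ I, β' r = -(ch / k) + ct * (r / √(r ^ 2 + k)) := by
    intro r hr
    have hφ := ((hasDerivAt_id r).const_mul (-(ch / k))).add
      ((hasDerivAt_sqrt_sq_add (hIpos r hr)).const_mul ct)
    refine (h₁ r hr).unique (hφ.congr_of_eventuallyEq ?_) |>.trans (by simp)
    exact eventually_of_mem (hIopen.mem_nhds hr) hβ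
  have hF : ∀ r ∈ I, radialFirstIntegral k β β' r = -ch := by
    intro r hr
    rw [← radialFirstIntegral_linear_add_sqrt hk (hIpos r hr) ct ch]
    simp only [radialFirstIntegral, hβ r hr, hβ' r hr]
  intro r hr
  have hconst : HasDerivAt (radialFirstIntegral k β β') 0 r :=
    (hasDerivAt_const r (-ch)).congr_of_eventuallyEq (eventually_of_mem (hIopen.mem_nhds hr) hF)
  linarith [(hasDerivAt_radialFirstIntegral (k := k) (h₁ r hr) (h₂ r hr)).unique hconst]

end

theorem ContDiffOn.hasDerivAt_deriv_and_deriv_deriv {β : ℝ → ℝ} {I : Set ℝ}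
    (hβ : ContDiffOn ℝ 2 β I) (hI : IsOpen I) :
    (∀ r ∈ I, HasDerivAt β (deriv β r) r) ∧
      ∀ r ∈ I, HasDerivAt (deriv β) (deriv (deriv β) r) r := by
  have hβ' : ContDiffOn ℝ 1 (deriv β) I := hβ.deriv_of_isOpen hI (by norm_num)
  exact ⟨fun r hr => ((hβ.differentiableOn (by norm_num) r hr).differentiableAt
      (hI.mem_nhds hr)).hasDerivAt,
    fun r hr => ((hβ'.differentiableOn (by norm_num) r hr).differentiableAt
      (hI.mem_nhds hr)).hasDerivAt⟩

theorem radial_static_potential_BK_general (k : ℝ) (hk : k ≠ 0)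
    (I : Set ℝ) (hIopen : IsOpen I) (hIconn : IsPreconnected I)
    (hIsub : I ⊆ {r : ℝ | 0 < r ∧ 0 < r ^ 2 + k})
    (β : ℝ → ℝ) (hβ : ContDiffOn ℝ 2 β I) :
    (∀ r ∈ I, 2 * r * deriv β r - 2 * β r + 2 * (r ^ 2 + k) * deriv (deriv β) r = 0) ↔
    ∃ ct ch : ℝ, ∀ r ∈ I, β r = -(ch / k) * r + ct * Real.sqrt (r ^ 2 + k) := by
  have hIpos : ∀ r ∈ I, 0 < r ^ 2 + k := fun r hr => (hIsub hr).2
  obtain ⟨h₁, h₂⟩ := hβ.hasDerivAt_deriv_and_deriv_deriv hIopen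
  constructor
  · exact exists_eq_of_radialODE hk hIopen hIconn hIpos h₁ h₂
  · rintro ⟨ct, ch, hβeq⟩
    exact radialODE_of_eq hk hIopen hIpos h₁ h₂ ct ch hβeq

/-- For the Birmingham–Kottler background with `m_c = 0` and curvature parameter `k ≠ 0`,
i.e. `f(r) = r² + k`, a `C²` function `β` satisfies the radial static-potential equation
`f'β' − βf'' + 2fβ'' = 0` (equivalently `2rβ' − 2β + 2(r²+k)β'' = 0`) on a nonempty open
interval `I ⊆ {r > 0 : r² + k > 0}` if and only if `β(r) = −(ĉ/k) r + c̃ √(r²+k)` for some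
constants `c̃, ĉ`. -/
theorem radial_static_potential_BK (k : ℝ) (hk : k ≠ 0)
    (I : Set ℝ) (hIopen : IsOpen I) (hIconn : IsPreconnected I) (hIne : I.Nonempty)
    (hIsub : I ⊆ {r : ℝ | 0 < r ∧ 0 < r ^ 2 + k})
    (β : ℝ → ℝ) (hβ : ContDiffOn ℝ 2 β I) :
    (∀ r ∈ I, 2 * r * deriv β r - 2 * β r + 2 * (r ^ 2 + k) * deriv (deriv β) r = 0) ↔
    ∃ ct ch : ℝ, ∀ r ∈ I, β r = -(ch / k) * r + ct * Real.sqrt (r ^ 2 + k) :=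
  radial_static_potential_BK_general k hk I hIopen hIconn hIsub β hβ
end

section
/- Let I ⊆ (0,∞) be a nonempty open interval, let U ⊆ ℝ^{d} (d ≥ 1) be a connected open set, and let V : I × U → ℝ be twice continuously differentiable. Suppose that for every index A ∈ {1,…,d} and every (r,x) ∈ I × U one has ∂²V/∂r∂x^A (r,x) = (1/r) ∂V/∂x^A (r,x). Then there exist functions β : I → ℝ and Ω : U → ℝ such that V(r,x) = β(r) + r·Ω(x) for all (r,x) ∈ I × U. -/
/-!
Dividing by `r`, the equation says `∂_r (∂_A V / r) = 0`, so on the interval `I` the partial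
derivatives scale as `∂_A V (r, x) = (r / r₀) ∂_A V (r₀, x)`. Hence for fixed `r` the function
`x ↦ V (r, x) - (r / r₀) V (r₀, x)` has vanishing gradient on the connected set `U`; it is therefore
a function `β r` of `r` alone, and `Ω = V (r₀, ·) / r₀`.
-/

theorem ContDiffOn.contDiffOn_lineDeriv {𝕜 E F : Type*} [NontriviallyNormedField 𝕜]
    [NormedAddCommGroup E] [NormedSpace 𝕜 E] [NormedAddCommGroup F] [NormedSpace 𝕜 F]
    {f : E → F} {s : Set E} {m n : WithTop ℕ∞} (hf : ContDiffOn 𝕜 n f s) (hs : IsOpen s)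
    (hmn : m + 1 ≤ n) (v : E) : ContDiffOn 𝕜 m (fun x => lineDeriv 𝕜 f x v) s := by
  refine ((hf.fderiv_of_isOpen hs hmn).clm_apply (contDiffOn_const (c := v))).congr
    fun x hx => ?_
  have hn : n ≠ 0 := (lt_of_lt_of_le (by simp) hmn).ne'
  exact ((hf.contDiffAt (hs.mem_nhds hx)).differentiableAt hn).lineDeriv_eq_fderiv

theorem DifferentiableAt.hasDerivAt_comp_prodMk_left {F G : Type*} [NormedAddCommGroup F]
    [NormedSpace ℝ F] [NormedAddCommGroup G] [NormedSpace ℝ G] {h : ℝ × F → G} {a : ℝ} {b : F}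
    (hh : DifferentiableAt ℝ h (a, b)) :
    HasDerivAt (fun t => h (t, b)) (lineDeriv ℝ h (a, b) (1, 0)) a := by
  rw [hh.lineDeriv_eq_fderiv]
  exact hh.hasFDerivAt.comp_hasDerivAt a ((hasDerivAt_id a).prodMk (hasDerivAt_const a b))

theorem IsOpen.eq_div_smul_of_hasDerivAt_eq_inv_smul {E : Type*} [NormedAddCommGroup E]
    [NormedSpace ℝ E] {φ : ℝ → E} {I : Set ℝ} (hI : IsOpen I) (hI' : IsPreconnected I)
    (h0 : (0 : ℝ) ∉ I) (hφ : ∀ r ∈ I, HasDerivAt φ (r⁻¹ • φ r) r) {r r₀ : ℝ}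
    (hr : r ∈ I) (hr₀ : r₀ ∈ I) : φ r = (r / r₀) • φ r₀ := by
  have hne : ∀ s ∈ I, s ≠ 0 := fun s hs h => h0 (h ▸ hs)
  have hψ : ∀ s ∈ I, HasDerivAt (fun s => s⁻¹ • φ s) 0 s := by
    intro s hs
    convert (hasDerivAt_inv (hne s hs)).smul (hφ s hs) using 1
    · rfl
    rw [smul_smul, ← add_smul, show s⁻¹ * s⁻¹ + -(s ^ 2)⁻¹ = 0 by ring, zero_smul]
  have hconst : r⁻¹ • φ r = r₀⁻¹ • φ r₀ := hI.is_const_of_deriv_eq_zero hI'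
    (fun s hs => (hψ s hs).differentiableAt.differentiableWithinAt)
    (fun s hs => (hψ s hs).deriv) hr hr₀
  rw [div_eq_mul_inv, mul_smul, ← hconst, smul_inv_smul₀ (hne r hr)]

theorem ContinuousLinearMap.eq_zero_of_apply_single {ι G : Type*} [Finite ι] [DecidableEq ι]
    [NormedAddCommGroup G] [NormedSpace ℝ G] {L : (ι → ℝ) →L[ℝ] G}
    (hL : ∀ i, L (Pi.single i 1) = 0) : L = 0 :=
  ContinuousLinearMap.coe_injective <| (Pi.basisFun ℝ ι).ext fun i => by simpa using hL i

theorem IsOpen.sub_smul_eq_of_lineDeriv_eq_smul {E ι G : Type*} [NormedAddCommGroup E]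
    [NormedSpace ℝ E] [Fintype ι] [DecidableEq ι] [NormedAddCommGroup G] [NormedSpace ℝ G]
    {f : E × (ι → ℝ) → G} {t : Set (ι → ℝ)} (ht : IsOpen t) (ht' : IsPreconnected t)
    {a b : E} (c : ℝ) (ha : ∀ y ∈ t, DifferentiableAt ℝ f (a, y))
    (hb : ∀ y ∈ t, DifferentiableAt ℝ f (b, y))
    (hab : ∀ y ∈ t, ∀ i, lineDeriv ℝ f (a, y) (0, Pi.single i 1) =
      c • lineDeriv ℝ f (b, y) (0, Pi.single i 1))
    {y y' : ι → ℝ} (hy : y ∈ t) (hy' : y' ∈ t) :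
    f (a, y) - c • f (b, y) = f (a, y') - c • f (b, y') := by
  have hderiv : ∀ z ∈ t,
      HasFDerivAt (fun z => f (a, z) - c • f (b, z)) (0 : (ι → ℝ) →L[ℝ] G) z := by
    intro z hz
    have hslice : ∀ e, DifferentiableAt ℝ f (e, z) → HasFDerivAt (fun z => f (e, z))
        ((fderiv ℝ f (e, z)).comp (ContinuousLinearMap.inr ℝ E (ι → ℝ))) z :=
      fun e he => he.hasFDerivAt.comp z (hasFDerivAt_prodMk_right e z)
    have hzero : (fderiv ℝ f (a, z)).comp (ContinuousLinearMap.inr ℝ E (ι → ℝ)) -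
        c • (fderiv ℝ f (b, z)).comp (ContinuousLinearMap.inr ℝ E (ι → ℝ)) = 0 := by
      refine ContinuousLinearMap.eq_zero_of_apply_single fun i => ?_
      simpa [← (ha z hz).lineDeriv_eq_fderiv, ← (hb z hz).lineDeriv_eq_fderiv, sub_eq_zero]
        using hab z hz i
    have h := (hslice a (ha z hz)).fun_sub ((hslice b (hb z hz)).fun_const_smul c)
    rwa [hzero] at h
  exact ht.is_const_of_fderiv_eq_zero ht'
    (fun z hz => (hderiv z hz).differentiableAt.differentiableWithinAt)
    (fun z hz => (hderiv z hz).fderiv) hy hy'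

theorem kid_separation_of_variables_general (d : ℕ)
    (I : Set ℝ) (hIopen : IsOpen I) (hIconn : IsPreconnected I) (hIne : I.Nonempty)
    (hIpos : I ⊆ Set.Ioi (0 : ℝ))
    (U : Set (Fin d → ℝ)) (hUopen : IsOpen U) (hUconn : IsConnected U)
    (V : ℝ × (Fin d → ℝ) → ℝ) (hV : ContDiffOn ℝ 2 V (I ×ˢ U))
    (heq : ∀ A : Fin d, ∀ r ∈ I, ∀ x ∈ U,
      lineDeriv ℝ (fun p => lineDeriv ℝ V p ((0 : ℝ), Pi.single A 1)) (r, x)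
          ((1 : ℝ), (0 : Fin d → ℝ)) =
        (1 / r) * lineDeriv ℝ V (r, x) ((0 : ℝ), Pi.single A 1)) :
    ∃ (β : ℝ → ℝ) (Ω : (Fin d → ℝ) → ℝ),
      ∀ r ∈ I, ∀ x ∈ U, V (r, x) = β r + r * Ω x := by
  obtain ⟨r₀, hr₀⟩ := hIne
  obtain ⟨x₀, hx₀⟩ := hUconn.nonempty
  have hS : IsOpen (I ×ˢ U) := hIopen.prod hUopen
  have hdiff : ∀ {f : ℝ × (Fin d → ℝ) → ℝ} {n : WithTop ℕ∞}, ContDiffOn ℝ n f (I ×ˢ U) →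
      n ≠ 0 → ∀ r ∈ I, ∀ x ∈ U, DifferentiableAt ℝ f (r, x) :=
    fun hf hn r hr x hx => (hf.contDiffAt (hS.mem_nhds ⟨hr, hx⟩)).differentiableAt hn
  have hradial : ∀ r ∈ I, ∀ x ∈ U, ∀ A, lineDeriv ℝ V (r, x) (0, Pi.single A 1) =
      (r / r₀) • lineDeriv ℝ V (r₀, x) (0, Pi.single A 1) := by
    intro r hr x hx A
    refine hIopen.eq_div_smul_of_hasDerivAt_eq_inv_smul
      (φ := fun s => lineDeriv ℝ V (s, x) (0, Pi.single A 1)) hIconn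
      (fun h0 => lt_irrefl (0 : ℝ) (hIpos h0)) (fun s hs => ?_) hr hr₀
    have h := hdiff (hV.contDiffOn_lineDeriv hS (by norm_num) (0, Pi.single A 1))
      one_ne_zero s hs x hx
    simpa [heq A s hs x hx] using h.hasDerivAt_comp_prodMk_left
  refine ⟨fun r => V (r, x₀) - r / r₀ * V (r₀, x₀), fun x => V (r₀, x) / r₀,
    fun r hr x hx => ?_⟩
  have h := hUopen.sub_smul_eq_of_lineDeriv_eq_smul hUconn.isPreconnected (r / r₀)
    (hdiff hV two_ne_zero r hr) (hdiff hV two_ne_zero r₀ hr₀) (hradial r hr) hx hx₀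
  simp only [smul_eq_mul] at h
  linear_combination h

/-- Separation of variables for the off-diagonal static KID equation
`∂²V/∂r∂x^A = (1/r) ∂V/∂x^A`: any `C²` solution on `I × U`, where `I ⊆ (0,∞)` is a nonempty
open interval and `U ⊆ ℝ^d` is a connected open set, is of the form
`V(r,x) = β(r) + r·Ω(x)`. -/
theorem kid_separation_of_variables (d : ℕ) (hd : 1 ≤ d)
    (I : Set ℝ) (hIopen : IsOpen I) (hIconn : IsPreconnected I) (hIne : I.Nonempty)
    (hIpos : I ⊆ Set.Ioi (0 : ℝ))
    (U : Set (Fin d → ℝ)) (hUopen : IsOpen U) (hUconn : IsConnected U)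
    (V : ℝ × (Fin d → ℝ) → ℝ) (hV : ContDiffOn ℝ 2 V (I ×ˢ U))
    (heq : ∀ A : Fin d, ∀ r ∈ I, ∀ x ∈ U,
      lineDeriv ℝ (fun p => lineDeriv ℝ V p ((0 : ℝ), Pi.single A 1)) (r, x)
          ((1 : ℝ), (0 : Fin d → ℝ)) =
        (1 / r) * lineDeriv ℝ V (r, x) ((0 : ℝ), Pi.single A 1)) :
    ∃ (β : ℝ → ℝ) (Ω : (Fin d → ℝ) → ℝ),
      ∀ r ∈ I, ∀ x ∈ U, V (r, x) = β r + r * Ω x :=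
  kid_separation_of_variables_general d I hIopen hIconn hIne hIpos U hUopen hUconn V hV heq
end

section
/- Let I ⊆ ℝ be a nonempty open interval, let f : I → ℝ be continuously differentiable with f > 0 on I, let J ⊆ ℝ be a nonempty open interval, and let V : I × J → ℝ be twice continuously differentiable. Suppose that ∂²V/∂r∂ψ (r,ψ) = ( f'(r) / (2 f(r)) ) ∂V/∂ψ (r,ψ) for all (r,ψ) ∈ I × J. Then there exist functions β : I → ℝ and γ : J → ℝ such that V(r,ψ) = β(r) + √(f(r)) · γ(ψ) for all (r,ψ) ∈ I × J. -/
/-- A function with vanishing derivative on a convex set is constant there. -/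
lemma aux_const_of_hasDerivAt_zero {s : Set ℝ} (hs : Convex ℝ s) {g : ℝ → ℝ}
    (h : ∀ x ∈ s, HasDerivAt g 0 x) {x y : ℝ} (hx : x ∈ s) (hy : y ∈ s) : g x = g y := by
  have := hs.norm_image_sub_le_of_norm_hasDerivWithin_le (f' := fun _ => (0 : ℝ)) (C := 0)
    (fun z hz => (h z hz).hasDerivWithinAt) (fun z hz => by simp) hx hy
  simp only [zero_mul, norm_le_zero_iff, sub_eq_zero] at this
  exact this.symm

/-- Separation of variables for the off-diagonal static KID equation
`∂²V/∂r∂ψ = (f'/(2f)) ∂V/∂ψ` arising for the Horowitz–Myers background with metric component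
`f dψ²`: any `C²` solution on `I × J` is of the form `V(r,ψ) = β(r) + √(f(r))·γ(ψ)`. -/
theorem kid_separation_of_variables_HM
    (I J : Set ℝ)
    (hIopen : IsOpen I) (hIconn : IsPreconnected I) (hIne : I.Nonempty)
    (hJopen : IsOpen J) (hJconn : IsPreconnected J) (hJne : J.Nonempty)
    (f : ℝ → ℝ) (hf : ContDiffOn ℝ 1 f I) (hfpos : ∀ r ∈ I, 0 < f r)
    (V : ℝ × ℝ → ℝ) (hV : ContDiffOn ℝ 2 V (I ×ˢ J))
    (heq : ∀ r ∈ I, ∀ ψ ∈ J,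
      lineDeriv ℝ (fun p => lineDeriv ℝ V p ((0 : ℝ), (1 : ℝ))) (r, ψ) ((1 : ℝ), (0 : ℝ)) =
        (deriv f r / (2 * f r)) * lineDeriv ℝ V (r, ψ) ((0 : ℝ), (1 : ℝ))) :
    ∃ β γ : ℝ → ℝ, ∀ r ∈ I, ∀ ψ ∈ J, V (r, ψ) = β r + Real.sqrt (f r) * γ ψ := by
  obtain ⟨r₀, hr₀⟩ := hIne
  obtain ⟨ψ₀, hψ₀⟩ := hJne
  have hIJopen : IsOpen (I ×ˢ J) := hIopen.prod hJopen
  have hIconv : Convex ℝ I := hIconn.ordConnected.convex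
  have hJconv : Convex ℝ J := hJconn.ordConnected.convex
  set W : ℝ × ℝ → ℝ := fun p => fderiv ℝ V p ((0 : ℝ), (1 : ℝ)) with hWdef
  -- V differentiable on the open set
  have hVdiff : ∀ p ∈ I ×ˢ J, DifferentiableAt ℝ V p := fun p hp =>
    (hV.differentiableOn (by norm_num)).differentiableAt (hIJopen.mem_nhds hp)
  -- W is C¹ on I ×ˢ J
  have hWC1 : ContDiffOn ℝ 1 W (I ×ˢ J) :=
    (hV.fderiv_of_isOpen hIJopen (by norm_num)).clm_apply contDiffOn_const
  have hWdiff : ∀ p ∈ I ×ˢ J, DifferentiableAt ℝ W p := fun p hp =>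
    (hWC1.differentiableOn one_ne_zero).differentiableAt (hIJopen.mem_nhds hp)
  -- the line derivatives in the hypothesis are honest fderivs
  have hlW : ∀ p ∈ I ×ˢ J, lineDeriv ℝ V p ((0 : ℝ), (1 : ℝ)) = W p := fun p hp =>
    (hVdiff p hp).lineDeriv_eq_fderiv
  have hlW2 : ∀ p ∈ I ×ˢ J,
      lineDeriv ℝ (fun q => lineDeriv ℝ V q ((0 : ℝ), (1 : ℝ))) p ((1 : ℝ), (0 : ℝ)) =
        fderiv ℝ W p ((1 : ℝ), (0 : ℝ)) := by
    intro p hp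
    have hev : (fun q => lineDeriv ℝ V q ((0 : ℝ), (1 : ℝ))) =ᶠ[nhds p] W := by
      filter_upwards [hIJopen.mem_nhds hp] with q hq using hlW q hq
    rw [hev.lineDeriv_eq]
    exact (hWdiff p hp).lineDeriv_eq_fderiv
  -- the PDE in fderiv form
  have heq' : ∀ r ∈ I, ∀ ψ ∈ J,
      fderiv ℝ W (r, ψ) ((1 : ℝ), (0 : ℝ)) = (deriv f r / (2 * f r)) * W (r, ψ) := by
    intro r hr ψ hψ
    have hp : (r, ψ) ∈ I ×ˢ J := ⟨hr, hψ⟩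
    rw [← hlW2 _ hp, heq r hr ψ hψ, hlW _ hp]
  -- derivative of r ↦ W (r, ψ)
  have hWr : ∀ r ∈ I, ∀ ψ ∈ J,
      HasDerivAt (fun r' => W (r', ψ)) (deriv f r / (2 * f r) * W (r, ψ)) r := by
    intro r hr ψ hψ
    have hι : HasDerivAt (fun r' : ℝ => ((r' : ℝ), ψ)) ((1 : ℝ), (0 : ℝ)) r :=
      HasDerivAt.prodMk (hasDerivAt_id r) (hasDerivAt_const r ψ)
    have := ((hWdiff (r, ψ) ⟨hr, hψ⟩).hasFDerivAt).comp_hasDerivAt r hι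
    rwa [heq' r hr ψ hψ] at this
  -- derivative of ψ ↦ V (r, ψ)
  have hVψ : ∀ r ∈ I, ∀ ψ ∈ J, HasDerivAt (fun ψ' => V (r, ψ')) (W (r, ψ)) ψ := by
    intro r hr ψ hψ
    have hι : HasDerivAt (fun ψ' : ℝ => ((r : ℝ), ψ')) ((0 : ℝ), (1 : ℝ)) ψ :=
      HasDerivAt.prodMk (hasDerivAt_const ψ r) (hasDerivAt_id ψ)
    exact ((hVdiff (r, ψ) ⟨hr, hψ⟩).hasFDerivAt).comp_hasDerivAt ψ hι
  -- derivative of √(f r)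
  have hsq : ∀ r ∈ I, HasDerivAt (fun r' => Real.sqrt (f r'))
      (deriv f r / (2 * Real.sqrt (f r))) r := by
    intro r hr
    have hfd : HasDerivAt f (deriv f r) r :=
      ((hf.differentiableOn one_ne_zero).differentiableAt (hIopen.mem_nhds hr)).hasDerivAt
    exact hfd.sqrt (hfpos r hr).ne'
  have hsqpos : ∀ r ∈ I, 0 < Real.sqrt (f r) := fun r hr => Real.sqrt_pos.2 (hfpos r hr)
  -- Step 1: r ↦ W (r, ψ) / √(f r) is constant on I
  have key1 : ∀ ψ ∈ J, ∀ r ∈ I,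
      W (r, ψ) / Real.sqrt (f r) = W (r₀, ψ) / Real.sqrt (f r₀) := by
    intro ψ hψ r hr
    refine aux_const_of_hasDerivAt_zero (g := fun r' => W (r', ψ) / Real.sqrt (f r')) hIconv (fun r hr => ?_) hr hr₀
    have h := (hWr r hr ψ hψ).div (hsq r hr) (hsqpos r hr).ne'
    refine h.congr_deriv ?_
    symm
    have hs := (hsqpos r hr).ne'
    have hf0 := (hfpos r hr).ne'
    have hss : Real.sqrt (f r) * Real.sqrt (f r) = f r := Real.mul_self_sqrt (hfpos r hr).le
    field_simp
    linear_combination (-deriv f r * W (r, ψ)) * hss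
  -- Step 2: conclude
  refine ⟨fun r => V (r, ψ₀), fun ψ => (V (r₀, ψ) - V (r₀, ψ₀)) / Real.sqrt (f r₀), ?_⟩
  intro r hr ψ hψ
  set γ : ℝ → ℝ := fun ψ => (V (r₀, ψ) - V (r₀, ψ₀)) / Real.sqrt (f r₀) with hγ
  have hkey : ∀ ψ ∈ J,
      V (r, ψ) - Real.sqrt (f r) * γ ψ = V (r, ψ₀) - Real.sqrt (f r) * γ ψ₀ := by
    intro ψ hψ
    refine aux_const_of_hasDerivAt_zero (g := fun ψ' => V (r, ψ') - Real.sqrt (f r) * γ ψ') hJconv (fun ψ hψ => ?_) hψ hψ₀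
    have hγ' : HasDerivAt γ (W (r₀, ψ) / Real.sqrt (f r₀)) ψ := by
      have := (((hVψ r₀ hr₀ ψ hψ).sub_const (V (r₀, ψ₀)))).div_const (Real.sqrt (f r₀))
      exact this
    have h := (hVψ r hr ψ hψ).sub ((hγ'.const_mul (Real.sqrt (f r))))
    refine h.congr_deriv ?_
    symm
    rw [← key1 ψ hψ r hr]
    field_simp [(hsqpos r hr).ne']
    ring
  have := hkey ψ hψ
  have hγ0 : γ ψ₀ = 0 := by simp [hγ]
  rw [hγ0, mul_zero, sub_zero] at this
  linarith [this]
end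

section
/- Let n ≥ 2 be an integer. A smooth function V : (0,∞) × ℝ^{n−1} → ℝ, written V = V(r, x) with x = (x¹,…,x^{n−1}), satisfies the system (i) ∂²V/∂r² + (1/r) ∂V/∂r − V/r² = 0, (ii) ∂²V/∂r∂x^A − (1/r) ∂V/∂x^A = 0 for all A, (iii) ∂²V/∂x^A∂x^B + δ_{AB} ( r³ ∂V/∂r − r² V ) = 0 for all A, B, if and only if there exist constants c̃, ĉ ∈ ℝ and c ∈ ℝ^{n−1} such that V(r,x) = c̃ r + ĉ/(2r) + r ( (ĉ/2) |x|² + ⟨c, x⟩ ) for all (r,x), where |x|² = Σ_A (x^A)² and ⟨c,x⟩ = Σ_A c_A x^A. -/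
/-- Directional (partial) derivative of a real-valued function along a vector `v`. -/
noncomputable def pd {E : Type*} [AddCommGroup E] [Module ℝ E] [TopologicalSpace E]
    (f : E → ℝ) (v : E) (x : E) : ℝ :=
  lineDeriv ℝ f x v

/-- The radial coordinate direction in `ℝ × ℝ^{n-1}`. -/
def dirR (d : ℕ) : ℝ × (Fin d → ℝ) := (1, 0)

/-- The `A`-th boundary coordinate direction in `ℝ × ℝ^{n-1}`. -/
def dirX (d : ℕ) (A : Fin d) : ℝ × (Fin d → ℝ) := (0, Pi.single A 1)

open Set Filter

section Aux
variable {d : ℕ}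

lemma lineR (p : ℝ × (Fin d → ℝ)) (t : ℝ) : p + t • dirR d = (p.1 + t, p.2) := by
  simp [dirR, Prod.ext_iff]

lemma lineX (p : ℝ × (Fin d → ℝ)) (A : Fin d) (t : ℝ) :
    p + t • dirX d A = (p.1, p.2 + t • (Pi.single A 1 : Fin d → ℝ)) := by
  simp [dirX, Prod.ext_iff]

lemma pd_of_hasDerivAt {f : ℝ × (Fin d → ℝ) → ℝ} {p v : ℝ × (Fin d → ℝ)} {L : ℝ}
    (h : HasDerivAt (fun t : ℝ => f (p + t • v)) L 0) : pd f v p = L :=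
  HasLineDerivAt.lineDeriv (h : HasLineDerivAt ℝ f L p v)

lemma pd_congr_nhds {f g : ℝ × (Fin d → ℝ) → ℝ} {p : ℝ × (Fin d → ℝ)}
    (v : ℝ × (Fin d → ℝ)) (h : f =ᶠ[nhds p] g) : pd f v p = pd g v p :=
  Filter.EventuallyEq.lineDeriv_eq h

lemma pd_congr_open {f g : ℝ × (Fin d → ℝ) → ℝ} {U : Set (ℝ × (Fin d → ℝ))}
    (hU : IsOpen U) (h : Set.EqOn f g U) {p} (hp : p ∈ U) (v) : pd f v p = pd g v p :=
  pd_congr_nhds v (Filter.eventuallyEq_of_mem (hU.mem_nhds hp) h)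

lemma pd_eq_fderiv {f : ℝ × (Fin d → ℝ) → ℝ} {p : ℝ × (Fin d → ℝ)}
    (h : DifferentiableAt ℝ f p) (v) : pd f v p = fderiv ℝ f p v :=
  DifferentiableAt.lineDeriv_eq_fderiv h

lemma hQder (k : ℝ) (c : Fin d → ℝ) (x : Fin d → ℝ) (A : Fin d) :
    HasDerivAt (fun t : ℝ => k * (∑ i, (x + t • (Pi.single A 1 : Fin d → ℝ)) i ^ 2)
      + ∑ i, c i * (x + t • (Pi.single A 1 : Fin d → ℝ)) i) (2 * k * x A + c A) 0 := by
  set e : Fin d → ℝ := Pi.single A 1 with he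
  have hfun : (fun t : ℝ => k * (∑ i, (x + t • e) i ^ 2) + ∑ i, c i * (x + t • e) i)
      = fun t : ℝ => k * (∑ i, (x i + t * e i) ^ 2) + ∑ i, c i * (x i + t * e i) := by
    funext t; simp [Pi.add_apply, Pi.smul_apply, smul_eq_mul]
  rw [hfun]
  have hi : ∀ i : Fin d, HasDerivAt (fun t : ℝ => x i + t * e i) (e i) 0 := fun i => by
    simpa using ((hasDerivAt_id (0 : ℝ)).mul_const (e i)).const_add (x i)
  have hsq : HasDerivAt (fun t : ℝ => ∑ i, (x i + t * e i) ^ 2)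
      (∑ i, 2 * (x i + 0 * e i) ^ 1 * e i) 0 :=
    HasDerivAt.fun_sum fun i _ => by simpa using (hi i).fun_pow 2
  have hlin : HasDerivAt (fun t : ℝ => ∑ i, c i * (x i + t * e i)) (∑ i, c i * e i) 0 :=
    HasDerivAt.fun_sum fun i _ => (hi i).const_mul (c i)
  have := (hsq.const_mul k).add hlin
  refine this.congr_deriv (Eq.symm ?_)
  have h1 : ∑ i, 2 * (x i + 0 * e i) ^ 1 * e i = 2 * x A := by
    simp [he, Pi.single_apply, mul_ite, Finset.sum_ite_eq']
  have h2 : ∑ i, c i * e i = c A := by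
    simp [he, Pi.single_apply, mul_ite, Finset.sum_ite_eq']
  rw [h1, h2]; ring

end Aux
section Backward
variable {d : ℕ}

lemma backward (V : ℝ × (Fin d → ℝ) → ℝ) (ct ch : ℝ) (c : Fin d → ℝ)
    (hf : ∀ r : ℝ, 0 < r → ∀ x : Fin d → ℝ,
      V (r, x) = ct * r + ch / (2 * r) + r * ((ch / 2) * (∑ A, x A ^ 2) + ∑ A, c A * x A)) :
    ∀ r : ℝ, 0 < r → ∀ x : Fin d → ℝ,
        (pd (pd V (dirR d)) (dirR d) (r, x) + (1 / r) * pd V (dirR d) (r, x)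
            - V (r, x) / r ^ 2 = 0) ∧
        (∀ A, pd (pd V (dirX d A)) (dirR d) (r, x)
            - (1 / r) * pd V (dirX d A) (r, x) = 0) ∧
        (∀ A B, pd (pd V (dirX d B)) (dirX d A) (r, x)
            + (if A = B then (1:ℝ) else 0) *
              (r ^ 3 * pd V (dirR d) (r, x) - r ^ 2 * V (r, x)) = 0) := by
  set S : Set (ℝ × (Fin d → ℝ)) := Set.Ioi (0:ℝ) ×ˢ (Set.univ : Set (Fin d → ℝ)) with hS
  have hSopen : IsOpen S := isOpen_Ioi.prod isOpen_univ
  set Q : (Fin d → ℝ) → ℝ := fun y => (ch / 2) * (∑ A, y A ^ 2) + ∑ A, c A * y A with hQ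
  set V0 : ℝ × (Fin d → ℝ) → ℝ := fun p => ct * p.1 + ch / (2 * p.1) + p.1 * Q p.2 with hV0
  have hEq : Set.EqOn V V0 S := by
    intro p hp
    have h := hf p.1 hp.1 p.2
    simpa [hV0, hQ] using h
  set W1R : ℝ × (Fin d → ℝ) → ℝ := fun p => ct - ch / (2 * p.1 ^ 2) + Q p.2 with hW1R
  set W1X : Fin d → (ℝ × (Fin d → ℝ)) → ℝ := fun A p => p.1 * (ch * p.2 A + c A) with hW1X
  -- first derivatives of V0
  have key1R : ∀ p ∈ S, pd V0 (dirR d) p = W1R p := by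
    intro p hp
    have hr : (0:ℝ) < p.1 := hp.1
    have hline : (fun t : ℝ => V0 (p + t • dirR d))
        = fun t : ℝ => ct * (p.1 + t) + ch * (2 * (p.1 + t))⁻¹ + (p.1 + t) * Q p.2 := by
      funext t; rw [lineR]; simp only [hV0]; ring
    have h1 : HasDerivAt (fun t : ℝ => p.1 + t) 1 0 := by
      simpa using (hasDerivAt_id (0:ℝ)).const_add p.1
    have h2 : HasDerivAt (fun t : ℝ => 2 * (p.1 + t)) 2 0 := by
      simpa using h1.const_mul 2
    have hne : (2:ℝ) * (p.1 + 0) ≠ 0 := by positivity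
    have h3 := (h2.inv hne).const_mul ch
    have h4 := ((h1.const_mul ct).add h3).add (h1.mul_const (Q p.2))
    have h5 : HasDerivAt (fun t : ℝ => ct * (p.1 + t) + ch * (2 * (p.1 + t))⁻¹ + (p.1 + t) * Q p.2)
        (W1R p) 0 := by
      refine h4.congr_deriv (Eq.symm ?_)
      simp only [hW1R]
      field_simp
      ring
    exact pd_of_hasDerivAt (hline ▸ h5)
  have key1X : ∀ (A : Fin d) (p : ℝ × (Fin d → ℝ)), pd V0 (dirX d A) p = W1X A p := by
    intro A p
    have hline : (fun t : ℝ => V0 (p + t • dirX d A))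
        = fun t : ℝ => (ct * p.1 + ch / (2 * p.1)) +
          (p.1 * ((ch/2) * (∑ i, (p.2 + t • (Pi.single A 1 : Fin d → ℝ)) i ^ 2)
            + ∑ i, c i * (p.2 + t • (Pi.single A 1 : Fin d → ℝ)) i)) := by
      funext t; rw [lineX]
    have h4 := (((hQder (ch/2) c p.2 A).const_mul p.1).const_add (ct * p.1 + ch / (2 * p.1)))
    have h5 : HasDerivAt (fun t : ℝ => (ct * p.1 + ch / (2 * p.1)) +
          (p.1 * ((ch/2) * (∑ i, (p.2 + t • (Pi.single A 1 : Fin d → ℝ)) i ^ 2)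
            + ∑ i, c i * (p.2 + t • (Pi.single A 1 : Fin d → ℝ)) i))) (W1X A p) 0 := by
      refine h4.congr_deriv (Eq.symm ?_)
      simp only [hW1X]
      ring
    exact pd_of_hasDerivAt (hline ▸ h5)
  -- pd V agrees with W1 on S
  have hVR : Set.EqOn (pd V (dirR d)) W1R S := fun p hp => by
    rw [pd_congr_open hSopen hEq hp]; exact key1R p hp
  have hVX : ∀ A, Set.EqOn (pd V (dirX d A)) (W1X A) S := fun A p hp => by
    rw [pd_congr_open hSopen hEq hp]; exact key1X A p
  -- second derivatives
  have key2RR : ∀ p ∈ S, pd W1R (dirR d) p = ch / p.1 ^ 3 := by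
    intro p hp
    have hr : (0:ℝ) < p.1 := hp.1
    have hline : (fun t : ℝ => W1R (p + t • dirR d))
        = fun t : ℝ => (ct + Q p.2) - ch * (2 * (p.1 + t) ^ 2)⁻¹ := by
      funext t; rw [lineR]; simp only [hW1R]; ring
    have h1 : HasDerivAt (fun t : ℝ => p.1 + t) 1 0 := by
      simpa using (hasDerivAt_id (0:ℝ)).const_add p.1
    have h2 : HasDerivAt (fun t : ℝ => 2 * (p.1 + t) ^ 2) (2 * (2 * (p.1 + 0) ^ 1 * 1)) 0 :=
      (h1.pow 2).const_mul 2
    have hne : (2:ℝ) * (p.1 + 0) ^ 2 ≠ 0 := by positivity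
    have h3 := ((h2.inv hne).const_mul ch).const_sub (ct + Q p.2)
    have h5 : HasDerivAt (fun t : ℝ => (ct + Q p.2) - ch * (2 * (p.1 + t) ^ 2)⁻¹)
        (ch / p.1 ^ 3) 0 := by
      refine h3.congr_deriv (Eq.symm ?_)
      field_simp
      ring
    exact pd_of_hasDerivAt (hline ▸ h5)
  have key2XR : ∀ (A : Fin d), ∀ p ∈ S, pd (W1X A) (dirR d) p = ch * p.2 A + c A := by
    intro A p hp
    have hline : (fun t : ℝ => W1X A (p + t • dirR d))
        = fun t : ℝ => (p.1 + t) * (ch * p.2 A + c A) := by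
      funext t; rw [lineR]
    have h1 : HasDerivAt (fun t : ℝ => p.1 + t) 1 0 := by
      simpa using (hasDerivAt_id (0:ℝ)).const_add p.1
    have h5 : HasDerivAt (fun t : ℝ => (p.1 + t) * (ch * p.2 A + c A)) (ch * p.2 A + c A) 0 := by
      simpa using h1.mul_const (ch * p.2 A + c A)
    exact pd_of_hasDerivAt (hline ▸ h5)
  have key2XX : ∀ (A B : Fin d), ∀ p ∈ S,
      pd (W1X B) (dirX d A) p = p.1 * (ch * (if B = A then (1:ℝ) else 0)) := by
    intro A B p hp
    have hline : (fun t : ℝ => W1X B (p + t • dirX d A))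
        = fun t : ℝ => p.1 * (ch * (p.2 B + t * (if B = A then (1:ℝ) else 0)) + c B) := by
      funext t; rw [lineX]
      simp only [hW1X, Pi.add_apply, Pi.smul_apply, Pi.single_apply, smul_eq_mul]
    have h1 : HasDerivAt (fun t : ℝ => p.2 B + t * (if B = A then (1:ℝ) else 0))
        (if B = A then (1:ℝ) else 0) 0 := by
      simpa only [id_eq, one_mul] using
        ((hasDerivAt_id (0:ℝ)).mul_const (if B = A then (1:ℝ) else 0)).const_add (p.2 B)
    have h5 := ((h1.const_mul ch).add_const (c B)).const_mul p.1
    exact pd_of_hasDerivAt (hline ▸ h5)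
  -- assemble
  intro r hr x
  have hpS : ((r, x) : ℝ × (Fin d → ℝ)) ∈ S := ⟨hr, trivial⟩
  have hrne : r ≠ 0 := ne_of_gt hr
  refine ⟨?_, ?_, ?_⟩
  · rw [pd_congr_open hSopen hVR hpS, key2RR _ hpS, hVR hpS, hEq hpS]
    simp only [hW1R, hV0]
    field_simp
    ring
  · intro A
    rw [pd_congr_open hSopen (hVX A) hpS, key2XR A _ hpS, hVX A hpS]
    simp only [hW1X]
    field_simp
    ring
  · intro A B
    rw [pd_congr_open hSopen (hVX B) hpS, key2XX A B _ hpS, hVR hpS, hEq hpS]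
    simp only [hW1R, hV0]
    by_cases hAB : A = B
    · subst hAB
      simp only [if_pos rfl, mul_one]
      field_simp
      ring
    · rw [if_neg (fun h => hAB h.symm), if_neg hAB]
      ring
end Backward

section Aux2
variable {d : ℕ}

lemma const_of_deriv_zero_Ioi {f : ℝ → ℝ} (h : ∀ r ∈ Set.Ioi (0:ℝ), HasDerivAt f 0 r)
    {r s : ℝ} (hr : 0 < r) (hs : 0 < s) : f r = f s := by
  refine (convex_Ioi (0:ℝ)).is_const_of_fderivWithin_eq_zero
    (fun y hy => (h y hy).differentiableAt.differentiableWithinAt) (fun y hy => ?_) hr hs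
  rw [fderivWithin_of_isOpen isOpen_Ioi hy]
  have := (h y hy).hasFDerivAt.fderiv
  rw [this]
  ext
  simp

lemma clm_ext_basis (φ : (Fin d → ℝ) →L[ℝ] ℝ) (h : ∀ i, φ (Pi.single i 1) = 0) : φ = 0 := by
  ext y
  have hy : y = ∑ i, y i • (Pi.single i 1 : Fin d → ℝ) := by
    have : ∀ i, y i • (Pi.single i 1 : Fin d → ℝ) = Pi.single i (y i) := by
      intro i; ext j; simp [Pi.single_apply, Pi.smul_apply]
    simp_rw [this]
    exact (Finset.univ_sum_single y).symm
  rw [hy]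
  simp [h]

lemma hasDerivAt_comp_lineP {g : (Fin d → ℝ) → ℝ} {x : Fin d → ℝ} (e : Fin d → ℝ)
    (hg : DifferentiableAt ℝ g x) :
    HasDerivAt (fun t : ℝ => g (x + t • e)) (fderiv ℝ g x e) 0 := by
  have hline : HasDerivAt (fun t : ℝ => x + t • e) e 0 := by
    simpa using ((hasDerivAt_id (0:ℝ)).smul_const e).const_add x
  have hg' : HasFDerivAt g (fderiv ℝ g x) (x + (0:ℝ) • e) := by
    simpa using hg.hasFDerivAt
  exact hg'.comp_hasDerivAt 0 hline

lemma hasDerivAt_slice_r {H : ℝ × (Fin d → ℝ) → ℝ} {r : ℝ} {x : Fin d → ℝ}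
    (h : DifferentiableAt ℝ H (r, x)) :
    HasDerivAt (fun s : ℝ => H (s, x)) (fderiv ℝ H (r, x) (dirR d)) r := by
  have hφ : HasDerivAt (fun s : ℝ => ((s, x) : ℝ × (Fin d → ℝ))) (dirR d) r :=
    (hasDerivAt_id r).prodMk (hasDerivAt_const r x)
  exact h.hasFDerivAt.comp_hasDerivAt r hφ

lemma hasDerivAt_lin_inv (C1 C2 r : ℝ) (hr : r ≠ 0) :
    HasDerivAt (fun s : ℝ => C1 * s + C2 / s) (C1 - C2 / r ^ 2) r := by
  have h1 := (hasDerivAt_id r).const_mul C1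
  have h2 := ((hasDerivAt_id r).inv hr).const_mul C2
  have := h1.add h2
  have hfun : (fun s : ℝ => C1 * s + C2 / s) = fun s : ℝ => C1 * s + C2 * (id s)⁻¹ := by
    funext s; rw [div_eq_mul_inv]; rfl
  rw [hfun]
  refine this.congr_deriv (Eq.symm ?_)
  simp only [id]
  field_simp
  ring
end Aux2

section Forward
variable {d : ℕ}

lemma forward (V : ℝ × (Fin d → ℝ) → ℝ)
    (hV : ContDiffOn ℝ (⊤ : ℕ∞) V (Set.Ioi (0 : ℝ) ×ˢ (Set.univ : Set (Fin d → ℝ))))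
    (hsys : ∀ r : ℝ, 0 < r → ∀ x : Fin d → ℝ,
        (pd (pd V (dirR d)) (dirR d) (r, x) + (1 / r) * pd V (dirR d) (r, x)
            - V (r, x) / r ^ 2 = 0) ∧
        (∀ A, pd (pd V (dirX d A)) (dirR d) (r, x)
            - (1 / r) * pd V (dirX d A) (r, x) = 0) ∧
        (∀ A B, pd (pd V (dirX d B)) (dirX d A) (r, x)
            + (if A = B then (1:ℝ) else 0) *
              (r ^ 3 * pd V (dirR d) (r, x) - r ^ 2 * V (r, x)) = 0)) :
    ∃ (ct ch : ℝ) (c : Fin d → ℝ), ∀ r : ℝ, 0 < r → ∀ x : Fin d → ℝ,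
      V (r, x) = ct * r + ch / (2 * r)
        + r * ((ch / 2) * (∑ A, x A ^ 2) + ∑ A, c A * x A) := by
  set S : Set (ℝ × (Fin d → ℝ)) := Set.Ioi (0:ℝ) ×ˢ (Set.univ : Set (Fin d → ℝ)) with hSdef
  have hSopen : IsOpen S := isOpen_Ioi.prod isOpen_univ
  have hmem : ∀ {r : ℝ} {x : Fin d → ℝ}, 0 < r → ((r,x) : ℝ × (Fin d → ℝ)) ∈ S :=
    fun hr => ⟨hr, trivial⟩
  have hCA : ∀ p ∈ S, ContDiffAt ℝ (⊤:ℕ∞) V p := fun p hp => hV.contDiffAt (hSopen.mem_nhds hp)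
  have hdV : ∀ p ∈ S, DifferentiableAt ℝ V p := fun p hp => (hCA p hp).differentiableAt (by simp)
  set G : (ℝ × (Fin d → ℝ)) → (ℝ × (Fin d → ℝ)) → ℝ := fun v p => fderiv ℝ V p v with hG
  have hGc : ∀ (v : ℝ × (Fin d → ℝ)), ∀ p ∈ S, ContDiffAt ℝ (⊤:ℕ∞) (G v) p := by
    intro v p hp
    have h1 : ContDiffAt ℝ (⊤:ℕ∞) (fderiv ℝ V) p := (hCA p hp).fderiv_right (by exact_mod_cast le_top)
    exact (ContinuousLinearMap.apply ℝ ℝ v).contDiff.contDiffAt.comp p h1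
  have hdG : ∀ v, ∀ p ∈ S, DifferentiableAt ℝ (G v) p :=
    fun v p hp => (hGc v p hp).differentiableAt (by simp)
  have hpdV : ∀ p ∈ S, ∀ v, pd V v p = G v p := fun p hp v => pd_eq_fderiv (hdV p hp) v
  have hpdpd : ∀ (v w), ∀ p ∈ S, pd (pd V v) w p = fderiv ℝ (G v) p w := by
    intro v w p hp
    rw [pd_congr_open hSopen (fun q hq => hpdV q hq v) hp w]
    exact pd_eq_fderiv (hdG v p hp) w
  have E1 : ∀ r : ℝ, 0 < r → ∀ x, fderiv ℝ (G (dirR d)) (r,x) (dirR d)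
      + (1/r) * G (dirR d) (r,x) - V (r,x) / r^2 = 0 := by
    intro r hr x
    have h := (hsys r hr x).1
    rwa [hpdpd _ _ _ (hmem hr), hpdV _ (hmem hr)] at h
  have E2 : ∀ r : ℝ, 0 < r → ∀ x A, fderiv ℝ (G (dirX d A)) (r,x) (dirR d)
      - (1/r) * G (dirX d A) (r,x) = 0 := by
    intro r hr x A
    have h := (hsys r hr x).2.1 A
    rwa [hpdpd _ _ _ (hmem hr), hpdV _ (hmem hr)] at h
  have E3 : ∀ r : ℝ, 0 < r → ∀ x A B, fderiv ℝ (G (dirX d B)) (r,x) (dirX d A)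
      + (if A = B then (1:ℝ) else 0) * (r^3 * G (dirR d) (r,x) - r^2 * V (r,x)) = 0 := by
    intro r hr x A B
    have h := (hsys r hr x).2.2 A B
    rwa [hpdpd _ _ _ (hmem hr), hpdV _ (hmem hr)] at h
  have hslice1 : ∀ (x : Fin d → ℝ), ∀ r:ℝ, 0 < r →
      HasDerivAt (fun s => V (s,x)) (G (dirR d) (r,x)) r :=
    fun x r hr => hasDerivAt_slice_r (hdV _ (hmem hr))
  have hslice2 : ∀ (v) (x : Fin d → ℝ), ∀ r:ℝ, 0 < r →
      HasDerivAt (fun s => G v (s,x)) (fderiv ℝ (G v) (r,x) (dirR d)) r :=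
    fun v x r hr => hasDerivAt_slice_r (hdG v _ (hmem hr))
  -- Euler ODE in r for fixed x
  set aa : (Fin d → ℝ) → ℝ := fun x => (G (dirR d) (1, x) + V (1, x)) / 2 with haadef
  set bb : (Fin d → ℝ) → ℝ := fun x => V (1, x) - aa x with hbbdef
  have hrep : ∀ r : ℝ, 0 < r → ∀ x, V (r, x) = aa x * r + bb x / r := by
    intro r hr x
    have hgod : ∀ s ∈ Set.Ioi (0:ℝ),
        HasDerivAt (fun u => (u * G (dirR d) (u,x) + V (u,x)) / u) 0 s := by
      intro s hs
      rw [Set.mem_Ioi] at hs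
      have hsne : s ≠ 0 := ne_of_gt hs
      have h1 : HasDerivAt (fun u => u * G (dirR d) (u,x) + V (u,x))
          (1 * G (dirR d) (s,x) + s * fderiv ℝ (G (dirR d)) (s,x) (dirR d) + G (dirR d) (s,x)) s :=
        ((hasDerivAt_id s).mul (hslice2 _ x s hs)).add (hslice1 x s hs)
      have h2 := h1.div (hasDerivAt_id' (x := s)) hsne
      have e1 := E1 s hs x
      have hD : fderiv ℝ (G (dirR d)) (s,x) (dirR d)
          = V (s,x) / s^2 - (1/s) * G (dirR d) (s,x) := by linarith
      refine h2.congr_deriv (Eq.symm ?_)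
      rw [hD]
      field_simp
      ring
    have hgr : r * G (dirR d) (r,x) + V (r,x) = 2 * aa x * r := by
      have hcst := const_of_deriv_zero_Ioi hgod hr one_pos
      have h1 : (1 * G (dirR d) (1,x) + V (1,x)) / 1 = 2 * aa x := by
        simp only [haadef]; ring
      rw [h1] at hcst
      field_simp at hcst
      linarith [hcst]
    have hkd : ∀ s ∈ Set.Ioi (0:ℝ),
        HasDerivAt (fun u => u * V (u,x) - aa x * u^2) 0 s := by
      intro s hs
      rw [Set.mem_Ioi] at hs
      have h1 : HasDerivAt (fun u => u * V (u,x) - aa x * u^2)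
          ((1 * V (s,x) + s * G (dirR d) (s,x)) - aa x * (2 * s^1 * 1)) s :=
        ((hasDerivAt_id s).mul (hslice1 x s hs)).sub (((hasDerivAt_id s).pow 2).const_mul (aa x))
      convert h1 using 1
      have hgr' : s * G (dirR d) (s,x) + V (s,x) = 2 * aa x * s := by
        have hcst := const_of_deriv_zero_Ioi hgod hs one_pos
        have h2 : (1 * G (dirR d) (1,x) + V (1,x)) / 1 = 2 * aa x := by
          simp only [haadef]; ring
        rw [h2] at hcst
        field_simp at hcst
        linarith [hcst]
      linarith [hgr']
    have hcst2 := const_of_deriv_zero_Ioi hkd hr one_pos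
    have h3 : (1:ℝ) * V (1,x) - aa x * 1^2 = bb x := by
      simp only [hbbdef]; ring
    rw [h3] at hcst2
    have hrne : r ≠ 0 := ne_of_gt hr
    field_simp
    linarith [hcst2]
  -- smoothness of aa, bb
  have hemb : ContDiff ℝ (⊤:ℕ∞) (fun y : Fin d → ℝ => ((1:ℝ), y)) := contDiff_const.prodMk contDiff_id
  have haaC : ContDiff ℝ (⊤:ℕ∞) aa := by
    rw [contDiff_iff_contDiffAt]
    intro x
    have h1 : ContDiffAt ℝ (⊤:ℕ∞) (fun y : Fin d → ℝ => G (dirR d) (1, y)) x :=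
      (hGc (dirR d) _ (hmem one_pos)).comp x hemb.contDiffAt
    have h2 : ContDiffAt ℝ (⊤:ℕ∞) (fun y : Fin d → ℝ => V (1, y)) x :=
      (hCA _ (hmem one_pos)).comp x hemb.contDiffAt
    exact (h1.add h2).div_const 2
  have hbbC : ContDiff ℝ (⊤:ℕ∞) bb := by
    rw [contDiff_iff_contDiffAt]
    intro x
    exact ((hCA _ (hmem one_pos)).comp x hemb.contDiffAt).sub haaC.contDiffAt
  -- x-derivatives via the representation
  have hGx : ∀ r:ℝ, 0 < r → ∀ (x e : Fin d → ℝ), G ((0:ℝ), e) (r, x)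
      = fderiv ℝ aa x e * r + fderiv ℝ bb x e / r := by
    intro r hr x e
    have hline : (fun t : ℝ => V ((r,x) + t • ((0:ℝ), e)))
        = fun t => aa (x + t • e) * r + bb (x + t • e) / r := by
      funext t
      have hpt : ((r,x) : ℝ × (Fin d → ℝ)) + t • ((0:ℝ), e) = (r, x + t • e) := by
        simp [Prod.ext_iff]
      rw [hpt, hrep r hr]
    have hd := ((hasDerivAt_comp_lineP e ((haaC.differentiable (by simp)) x)).mul_const r).add
      ((hasDerivAt_comp_lineP e ((hbbC.differentiable (by simp)) x)).div_const r)
    have hpd : pd V ((0:ℝ),e) (r,x) = fderiv ℝ aa x e * r + fderiv ℝ bb x e / r :=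
      pd_of_hasDerivAt (by rw [hline]; exact hd)
    rw [← hpd]
    exact (hpdV _ (hmem hr) ((0:ℝ),e)).symm
  -- (ii) forces bb' = 0
  have hbbz : ∀ (x : Fin d → ℝ) A, fderiv ℝ bb x (Pi.single A 1) = 0 := by
    intro x A
    have hEqsl : ∀ s ∈ Set.Ioi (0:ℝ), G (dirX d A) (s, x)
        = fderiv ℝ aa x (Pi.single A 1) * s + fderiv ℝ bb x (Pi.single A 1) / s := by
      intro s hs
      exact hGx s hs x (Pi.single A 1)
    have hd1 := hslice2 (dirX d A) x 1 one_pos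
    have hd2 : HasDerivAt (fun s => G (dirX d A) (s,x))
        (fderiv ℝ aa x (Pi.single A 1) - fderiv ℝ bb x (Pi.single A 1) / 1^2) 1 := by
      have hexp := hasDerivAt_lin_inv (fderiv ℝ aa x (Pi.single A 1))
        (fderiv ℝ bb x (Pi.single A 1)) 1 one_ne_zero
      exact hexp.congr_of_eventuallyEq
        (eventuallyEq_of_mem (isOpen_Ioi.mem_nhds (by norm_num : (1:ℝ) ∈ Set.Ioi (0:ℝ)))
          fun s hs => hEqsl s hs)
    have huni := hd1.unique hd2
    have he2 := E2 1 one_pos x A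
    rw [huni, hEqsl 1 (by norm_num)] at he2
    norm_num at he2
    linarith [he2]
  have hbbz' : ∀ x : Fin d → ℝ, fderiv ℝ bb x = 0 := fun x => clm_ext_basis _ (hbbz x)
  have hbbconst : ∀ x : Fin d → ℝ, bb x = bb 0 :=
    fun x => is_const_of_fderiv_eq_zero (hbbC.differentiable (by simp)) hbbz' x 0
  -- value of G eR
  have hGR : ∀ r:ℝ, 0 < r → ∀ x : Fin d → ℝ, G (dirR d) (r,x) = aa x - bb 0 / r^2 := by
    intro r hr x
    have hd1 := hslice1 x r hr
    have hexp := hasDerivAt_lin_inv (aa x) (bb 0) r (ne_of_gt hr)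
    have hd2 : HasDerivAt (fun s => V (s,x)) (aa x - bb 0/r^2) r := by
      refine hexp.congr_of_eventuallyEq
        (eventuallyEq_of_mem (isOpen_Ioi.mem_nhds hr) fun s hs => ?_)
      rw [Set.mem_Ioi] at hs
      rw [hrep s hs x, hbbconst x]
    exact hd1.unique hd2
  -- second derivatives of aa
  have hDaa : ∀ (e : Fin d → ℝ), Differentiable ℝ (fun y => fderiv ℝ aa y e) := by
    intro e
    have h1 : ContDiff ℝ (⊤:ℕ∞) (fderiv ℝ aa) := haaC.fderiv_right (by exact_mod_cast le_top)
    exact ((ContinuousLinearMap.apply ℝ ℝ e).contDiff.comp h1).differentiable (by simp)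
  have haa2 : ∀ (x : Fin d → ℝ) A B,
      fderiv ℝ (fun y => fderiv ℝ aa y (Pi.single B 1)) x (Pi.single A 1)
      = (if A = B then (1:ℝ) else 0) * (2 * bb 0) := by
    intro x A B
    have hfd : fderiv ℝ (G (dirX d B)) (1,x) (dirX d A)
        = fderiv ℝ (fun y => fderiv ℝ aa y (Pi.single B 1)) x (Pi.single A 1) * 1 := by
      rw [← pd_eq_fderiv (hdG _ _ (hmem one_pos)) (dirX d A)]
      refine pd_of_hasDerivAt ?_
      have hline : (fun t : ℝ => G (dirX d B) (((1:ℝ),x) + t • dirX d A))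
          = fun t => (fun y => fderiv ℝ aa y (Pi.single B 1)) (x + t • Pi.single A 1) * 1 := by
        funext t
        rw [lineX]
        have h4 := hGx 1 one_pos (x + t • (Pi.single A 1 : Fin d → ℝ)) (Pi.single B 1)
        have h5 : G (dirX d B) ((1:ℝ), x + t • (Pi.single A 1 : Fin d → ℝ))
            = G ((0:ℝ), Pi.single B 1) ((1:ℝ), x + t • (Pi.single A 1 : Fin d → ℝ)) := rfl
        rw [h5, h4, hbbz']
        simp
      rw [hline]
      exact (hasDerivAt_comp_lineP _ ((hDaa (Pi.single B 1)) x)).mul_const 1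
    have he3 := E3 1 one_pos x A B
    rw [hfd, hGR 1 one_pos x, hrep 1 one_pos x, hbbconst x] at he3
    rcases eq_or_ne A B with hab | hab
    · rw [if_pos hab] at he3 ⊢
      norm_num at he3 ⊢
      linarith [he3]
    · rw [if_neg hab] at he3 ⊢
      norm_num at he3 ⊢
      linarith [he3]
  -- integrate: first derivative of aa
  set c : Fin d → ℝ := fun i => fderiv ℝ aa 0 (Pi.single i 1) with hcdef
  have haa1 : ∀ (x : Fin d → ℝ) B, fderiv ℝ aa x (Pi.single B 1) = 2 * bb 0 * x B + c B := by
    intro x B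
    have hproj : ∀ y : Fin d → ℝ, HasFDerivAt (fun y : Fin d → ℝ => 2 * bb 0 * y B)
        ((2 * bb 0) • (ContinuousLinearMap.proj B : (Fin d → ℝ) →L[ℝ] ℝ)) y := by
      intro y
      exact ((ContinuousLinearMap.proj B : (Fin d → ℝ) →L[ℝ] ℝ).hasFDerivAt).const_mul (2 * bb 0)
    have hu : ∀ y : Fin d → ℝ, HasFDerivAt (fun y : Fin d → ℝ => fderiv ℝ aa y (Pi.single B 1) - 2 * bb 0 * y B)
        (fderiv ℝ (fun y => fderiv ℝ aa y (Pi.single B 1)) y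
          - (2 * bb 0) • (ContinuousLinearMap.proj B : (Fin d → ℝ) →L[ℝ] ℝ)) y :=
      fun y => ((hDaa (Pi.single B 1) y).hasFDerivAt).sub (hproj y)
    have hfz : ∀ y : Fin d → ℝ,
        fderiv ℝ (fun y : Fin d → ℝ => fderiv ℝ aa y (Pi.single B 1) - 2 * bb 0 * y B) y = 0 := by
      intro y
      rw [(hu y).fderiv]
      apply clm_ext_basis
      intro i
      simp only [ContinuousLinearMap.sub_apply, ContinuousLinearMap.smul_apply,
        ContinuousLinearMap.proj_apply, smul_eq_mul]
      rw [haa2 y i B]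
      rcases eq_or_ne i B with hib | hib
      · subst hib; simp [Pi.single_apply]
      · rw [if_neg hib, Pi.single_apply, if_neg (fun h : B = i => hib h.symm)]
        simp
    have hprojd : Differentiable ℝ (fun y : Fin d → ℝ => 2 * bb 0 * y B) := by
      intro y
      exact (hproj y).differentiableAt
    have hcst := is_const_of_fderiv_eq_zero
      ((hDaa (Pi.single B 1)).sub hprojd) hfz x 0
    simp only [Pi.sub_apply, Pi.zero_apply, mul_zero, sub_zero] at hcst
    rw [hcdef]
    linarith [hcst]
  -- integrate again
  set q : (Fin d → ℝ) → ℝ := fun y => bb 0 * ∑ i, y i ^ 2 + ∑ i, c i * y i with hqdef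
  have hqd : Differentiable ℝ q := by
    apply Differentiable.add
    · apply Differentiable.const_mul
      apply Differentiable.fun_sum
      intro i _
      exact ((ContinuousLinearMap.proj i : (Fin d → ℝ) →L[ℝ] ℝ).differentiable).pow 2
    · apply Differentiable.fun_sum
      intro i _
      exact ((ContinuousLinearMap.proj i : (Fin d → ℝ) →L[ℝ] ℝ).differentiable).const_mul (c i)
  have hqfd : ∀ (y : Fin d → ℝ) B, fderiv ℝ q y (Pi.single B 1) = 2 * bb 0 * y B + c B := by
    intro y B
    have h1 := hasDerivAt_comp_lineP (Pi.single B 1) (hqd y)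
    have h2 := hQder (bb 0) c y B
    exact h1.unique h2
  have hwz : ∀ y : Fin d → ℝ, aa y = aa 0 + q y := by
    intro y
    have hfw : ∀ z : Fin d → ℝ, fderiv ℝ (fun y => aa y - q y) z = 0 := by
      intro z
      rw [fderiv_fun_sub ((haaC.differentiable (by simp)) z) (hqd z)]
      apply clm_ext_basis
      intro i
      simp only [ContinuousLinearMap.sub_apply]
      rw [haa1 z i, hqfd z i]
      ring
    have hcst := is_const_of_fderiv_eq_zero ((haaC.differentiable (by simp)).sub hqd) hfw y 0
    have hq0 : q 0 = 0 := by simp [hqdef]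
    simp only [Pi.sub_apply] at hcst
    rw [hq0] at hcst
    linarith [hcst]
  refine ⟨aa 0, 2 * bb 0, c, ?_⟩
  intro r hr x
  have hrne : r ≠ 0 := ne_of_gt hr
  rw [hrep r hr x, hbbconst x, hwz x]
  simp only [hqdef]
  field_simp
  ring

end Forward


/-- Classification of the static potentials of the Birmingham–Kottler background with `k = 0`
and `m_c = 0` (hyperbolic space with flat conformal infinity), metric
`g = dr²/r² + r²((dx¹)² + ⋯ + (dx^{n−1})²)`: a smooth `V : (0,∞) × ℝ^{n−1} → ℝ` satisfies the
static KID system (i)–(iii) iff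
`V(r,x) = c̃ r + ĉ/(2r) + r((ĉ/2)|x|² + ⟨c,x⟩)` for some constants `c̃, ĉ ∈ ℝ`,
`c ∈ ℝ^{n−1}`. -/
theorem static_KID_classification_BK_flat (n : ℕ) (hn : 2 ≤ n)
    (V : ℝ × (Fin (n - 1) → ℝ) → ℝ)
    (hV : ContDiffOn ℝ (⊤ : ℕ∞) V (Set.Ioi (0 : ℝ) ×ˢ (Set.univ : Set (Fin (n - 1) → ℝ)))) :
    ((∀ r : ℝ, 0 < r → ∀ x : Fin (n - 1) → ℝ,
        (pd (pd V (dirR (n - 1))) (dirR (n - 1)) (r, x)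
            + (1 / r) * pd V (dirR (n - 1)) (r, x) - V (r, x) / r ^ 2 = 0) ∧
        (∀ A : Fin (n - 1),
          pd (pd V (dirX (n - 1) A)) (dirR (n - 1)) (r, x)
            - (1 / r) * pd V (dirX (n - 1) A) (r, x) = 0) ∧
        (∀ A B : Fin (n - 1),
          pd (pd V (dirX (n - 1) B)) (dirX (n - 1) A) (r, x)
            + (if A = B then (1 : ℝ) else 0) *
              (r ^ 3 * pd V (dirR (n - 1)) (r, x) - r ^ 2 * V (r, x)) = 0))
      ↔
      ∃ (ct ch : ℝ) (c : Fin (n - 1) → ℝ),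
        ∀ r : ℝ, 0 < r → ∀ x : Fin (n - 1) → ℝ,
          V (r, x) = ct * r + ch / (2 * r)
            + r * ((ch / 2) * (∑ A, x A ^ 2) + ∑ A, c A * x A)) := by
  constructor
  · intro h
    exact forward V hV h
  · rintro ⟨ct, ch, c, h⟩
    exact fun r hr x => backward V ct ch c h r hr x
end
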